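/- arXiv:1610.04434 — 9 statements merged into one kernel-verified Lean document; each statement's English description precedes it below -/
import Mathlib

section
/- Let f : ℝ → ℝ be locally integrable. The firing map Φ of the LIF model with leak σ ≥ 0, defined by Φ(t) = inf{ t* > t : e^{σt} ≤ ∫_t^{t*} (f(u) − σ) e^{σu} du }, is well-defined (i.e. the defining set is nonempty) for every t ∈ ℝ if and only if limsup_{t→+∞} ∫_0^t (f(u) − σ) e^{σu} du = +∞. -/
open MeasureTheory Filter Set intervalIntegral

noncomputable section

/-- A set `A ⊆ ℝ` is relatively dense. -/
def RelDense (A : Set ℝ) : Prop := ∃ l > 0, ∀ x : ℝ, ∃ τ ∈ A, x < τ ∧ τ < x + l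

/-- The set over which the infimum defining the LIF firing map is taken. -/
def FiringSet (σ : ℝ) (f : ℝ → ℝ) (t : ℝ) : Set ℝ :=
  {t' | t < t' ∧ Real.exp (σ * t) ≤ ∫ u in t..t', (f u - σ) * Real.exp (σ * u)}

/-- `y` is the firing-map value at `t`: the smallest `t' > t` with
`e^{σ t} = ∫_t^{t'} (f u - σ) e^{σ u} du`. -/
def FiringEq (σ : ℝ) (f : ℝ → ℝ) (t y : ℝ) : Prop :=
  IsLeast {t' | t < t' ∧ Real.exp (σ * t) = ∫ u in t..t', (f u - σ) * Real.exp (σ * u)} y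

/-- The Stepanov `S¹` seminorm. -/
def SNorm (f : ℝ → ℝ) : ℝ := ⨆ t : ℝ, ∫ u in t..(t + 1), |f u|

/-- Stepanov `S¹`-almost periodicity. -/
def S1AP (f : ℝ → ℝ) : Prop :=
  ∀ ε > 0, RelDense {τ | SNorm (fun u => f (u + τ) - f u) < ε}

/-- `D(η; f, g) = sup_u μ({t ∈ [u,u+1] : |f t - g t| ≥ η})`. -/
def Dfun (η : ℝ) (f g : ℝ → ℝ) : ℝ :=
  ⨆ u : ℝ, (volume {t ∈ Set.Icc u (u + 1) | η ≤ |f t - g t|}).toReal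

/-- Almost periodicity in the Lebesgue measure (μ-almost periodicity). -/
def MuAP (f : ℝ → ℝ) : Prop :=
  ∀ ε > 0, ∀ η > 0, RelDense {τ | Dfun η (fun t => f (t + τ)) f ≤ ε}

/-- Bohr (uniform) almost periodicity. -/
def BohrAP (g : ℝ → ℝ) : Prop :=
  Continuous g ∧ ∀ ε > 0, RelDense {τ | (⨆ t : ℝ, |g (t + τ) - g t|) < ε}

/-- Limit-periodicity: `g` is a uniform limit of continuous periodic functions. -/
def LimitPeriodic (g : ℝ → ℝ) : Prop :=
  ∃ gn : ℕ → ℝ → ℝ, (∀ n, Continuous (gn n) ∧ ∃ p > 0, Function.Periodic (gn n) p) ∧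
    TendstoUniformly gn g atTop

/-!
Write `F` for the primitive `t ↦ ∫₀ᵗ (f u - σ) e^{σu} du`. The firing set at `t` is nonempty iff
`F` later exceeds `F t + e^{σt}`. As `e^{σt}` is positive and nondecreasing for `σ ≥ 0`, chaining
such jumps from any `a` gains at least `e^{σa}` each time, so `F` is unbounded above at `+∞`;
conversely, unboundedness of `F` produces the required jump directly.
-/

theorem MeasureTheory.LocallyIntegrable.intervalIntegrable {E : Type*} [NormedAddCommGroup E]
    {f : ℝ → E} (hf : LocallyIntegrable f volume) (a b : ℝ) :
    IntervalIntegrable f volume a b :=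
  intervalIntegrable_iff.mpr <| (hf.integrableOn_isCompact isCompact_uIcc).mono_set uIoc_subset_uIcc

section Growth

variable {F w : ℝ → ℝ}

theorem exists_ge_add_natCast_mul_le (hw : Monotone w) (h : ∀ t, ∃ t' > t, F t + w t ≤ F t')
    (a : ℝ) (n : ℕ) : ∃ t ≥ a, F a + n * w a ≤ F t := by
  induction n with
  | zero => exact ⟨a, le_rfl, by simp⟩
  | succ n ih =>
    obtain ⟨t, hat, hFt⟩ := ih
    obtain ⟨t', htt', hFt'⟩ := h t
    refine ⟨t', hat.trans htt'.le, ?_⟩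
    push_cast
    linarith [hw hat]

theorem forall_exists_gt_add_le_iff_frequently_le (hw₀ : ∀ t, 0 < w t) (hw : Monotone w) :
    (∀ t, ∃ t' > t, F t + w t ≤ F t') ↔ ∀ M, ∃ᶠ t in atTop, M ≤ F t := by
  constructor
  · intro h M
    refine frequently_atTop.mpr fun a => ?_
    obtain ⟨n, hn⟩ := exists_nat_ge ((M - F a) / w a)
    obtain ⟨t, hat, hFt⟩ := exists_ge_add_natCast_mul_le hw h a n
    rw [div_le_iff₀ (hw₀ a)] at hn
    exact ⟨t, hat, by linarith⟩
  · intro h t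
    obtain ⟨t', htt', hFt'⟩ := frequently_atTop.mp (h (F t + w t)) (t + 1)
    exact ⟨t', by linarith, hFt'⟩

end Growth

theorem firingSet_nonempty_iff {σ : ℝ} {f : ℝ → ℝ} (hf : LocallyIntegrable f volume) (t : ℝ) :
    (FiringSet σ f t).Nonempty ↔
      ∃ t' > t, (∫ u in (0:ℝ)..t, (f u - σ) * Real.exp (σ * u)) + Real.exp (σ * t) ≤
        ∫ u in (0:ℝ)..t', (f u - σ) * Real.exp (σ * u) := by
  have hg : LocallyIntegrable (fun u => (f u - σ) * Real.exp (σ * u)) volume :=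
    (hf.sub (locallyIntegrable_const σ)).mul_continuous (by fun_prop)
  refine exists_congr fun t' => and_congr_right fun _ => ?_
  rw [← integral_interval_sub_left (hg.intervalIntegrable 0 t') (hg.intervalIntegrable 0 t)]
  exact le_sub_iff_add_le'

theorem stmt0 (σ : ℝ) (hσ : 0 ≤ σ) (f : ℝ → ℝ) (hf : LocallyIntegrable f volume) :
    (∀ t : ℝ, (FiringSet σ f t).Nonempty) ↔
      (∀ M : ℝ, ∃ᶠ t in atTop, M ≤ ∫ u in (0:ℝ)..t, (f u - σ) * Real.exp (σ * u)) := by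
  simp_rw [firingSet_nonempty_iff hf]
  exact forall_exists_gt_add_le_iff_frequently_le (fun t => Real.exp_pos _)
    (Real.exp_monotone.comp (monotone_mul_left_of_nonneg hσ))
end
end

section
/- Let f : ℝ → ℝ be locally integrable such that the mean value M{f} = lim_{T→+∞} (1/T) ∫_0^T f(u) du exists (allowing the value +∞) and satisfies M{f} > σ, where σ ≥ 0. Then limsup_{t→+∞} ∫_0^t (f(u) − σ) e^{σu} du = +∞; in particular the firing map of the LIF model with leak σ is well-defined for every t ∈ ℝ. -/
open MeasureTheory Filter Set intervalIntegral

noncomputable section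

/-!
With `F t = ∫₀ᵗ (f u - σ) e^{σu} du`, integration by parts (`F` is absolutely continuous) gives
`∫₀ᵀ (f u - σ) du = e^{-σT} F T + σ ∫₀ᵀ e^{-σt} F t dt`, an average of `F` over `[0, T]` against
weights of total mass `1`. If `F` were bounded above by `K`, the left side would stay `≤ K`; but
by the mean-value hypothesis it grows like `(M{f} - σ) T`.
-/

lemma integral_mul_exp_neg_eq {g : ℝ → ℝ} {a b : ℝ} (hg : IntervalIntegrable g volume a b)
    (σ : ℝ) :
    ∫ u in a..b, g u * Real.exp (-(σ * u)) =
      Real.exp (-(σ * b)) * (∫ u in a..b, g u) +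
        ∫ t in a..b, σ * Real.exp (-(σ * t)) * ∫ u in a..t, g u := by
  have hG := hg.absolutelyContinuousOnInterval_intervalIntegral (c := a) left_mem_uIcc
  have hE : AbsolutelyContinuousOnInterval (fun t => Real.exp (-(σ * t))) a b :=
    ContDiffOn.absolutelyContinuousOnInterval (by fun_prop)
  have hG' : ∫ t in a..b, deriv (fun x => ∫ u in a..x, g u) t * Real.exp (-(σ * t)) =
      ∫ u in a..b, g u * Real.exp (-(σ * u)) := by
    refine intervalIntegral.integral_congr_ae ?_
    filter_upwards [hg.ae_hasDerivAt_integral] with t ht htab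
    rw [(ht (uIoc_subset_uIcc htab) a left_mem_uIcc).deriv]
  have hE' (t : ℝ) :
      deriv (fun t => Real.exp (-(σ * t))) t = -(σ * Real.exp (-(σ * t))) := by
    have h := ((hasDerivAt_id' t).const_mul σ).fun_neg.exp
    rw [h.deriv]
    ring
  have hparts := hG.integral_mul_deriv_eq_deriv_mul hE
  simp only [hG', hE', intervalIntegral.integral_same, zero_mul, sub_zero, mul_neg,
    intervalIntegral.integral_neg] at hparts
  simp only [mul_comm (∫ u in a..b, g u), mul_comm (σ * _)] at hparts ⊢
  linarith

lemma integral_exp_neg_mul (σ a b : ℝ) :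
    ∫ t in a..b, σ * Real.exp (-(σ * t)) = Real.exp (-(σ * a)) - Real.exp (-(σ * b)) := by
  have h (t : ℝ) : HasDerivAt (fun t => -Real.exp (-(σ * t))) (σ * Real.exp (-(σ * t))) t := by
    convert! (((hasDerivAt_id' t).const_mul σ).fun_neg.exp).fun_neg using 1
    ring
  rw [intervalIntegral.integral_eq_sub_of_hasDerivAt (fun t _ => h t)
    (by apply Continuous.intervalIntegrable; fun_prop)]
  ring

lemma integral_mul_exp_neg_le {g : ℝ → ℝ} {σ K a b : ℝ} (hσ : 0 ≤ σ) (hab : a ≤ b)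
    (hg : IntervalIntegrable g volume a b) (hbound : ∀ t ∈ Icc a b, ∫ u in a..t, g u ≤ K) :
    ∫ u in a..b, g u * Real.exp (-(σ * u)) ≤ Real.exp (-(σ * a)) * K := by
  have hprim : ContinuousOn (fun t => ∫ u in a..t, g u) (uIcc a b) :=
    intervalIntegral.continuousOn_primitive_interval' hg left_mem_uIcc
  have htail : ∫ t in a..b, σ * Real.exp (-(σ * t)) * ∫ u in a..t, g u ≤
      ∫ t in a..b, σ * Real.exp (-(σ * t)) * K := by
    refine intervalIntegral.integral_mono_on hab ?_ ?_ fun t ht => ?_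
    · exact ((by fun_prop : Continuous fun t => σ * Real.exp (-(σ * t))).continuousOn.mul
        hprim).intervalIntegrable
    · apply Continuous.intervalIntegrable; fun_prop
    · exact mul_le_mul_of_nonneg_left (hbound t ht) (by positivity)
  rw [intervalIntegral.integral_mul_const, integral_exp_neg_mul] at htail
  rw [integral_mul_exp_neg_eq hg]
  nlinarith [hbound b ⟨hab, le_rfl⟩, Real.exp_pos (-(σ * b))]

lemma tendsto_sub_mul_atTop_of_mean {A : ℝ → ℝ} {σ : ℝ}
    (hmean : (∃ m, σ < m ∧ Tendsto (fun T => (1 / T) * A T) atTop (nhds m)) ∨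
      Tendsto (fun T => (1 / T) * A T) atTop atTop) :
    Tendsto (fun T => A T - σ * T) atTop atTop := by
  have hmul : Tendsto (fun T => T * ((1 / T) * A T - σ)) atTop atTop := by
    rcases hmean with ⟨m, hm, hlim⟩ | hlim
    · exact tendsto_id.atTop_mul_pos (sub_pos.2 hm) (hlim.sub_const σ)
    · exact tendsto_id.atTop_mul_atTop₀ (tendsto_atTop_add_const_right _ (-σ) hlim)
  refine hmul.congr' ((eventually_gt_atTop 0).mono fun T hT => ?_)
  field_simp

lemma Continuous.bddAbove_image_Ici_of_eventually_le {F : ℝ → ℝ} (hF : Continuous F) {M : ℝ}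
    (hM : ∀ᶠ t in atTop, F t ≤ M) (a : ℝ) : BddAbove (F '' Ici a) := by
  obtain ⟨T, hT⟩ := eventually_atTop.1 hM
  obtain ⟨C, hC⟩ := (isCompact_Icc (a := a) (b := T)).bddAbove_image hF.continuousOn
  refine ⟨max C M, forall_mem_image.2 fun t (ht : a ≤ t) => ?_⟩
  rcases le_total t T with htT | hTt
  · exact (hC (mem_image_of_mem F ⟨ht, htT⟩)).trans (le_max_left C M)
  · exact (hT t hTt).trans (le_max_right C M)

lemma frequently_le_integral_of_tendsto_integral_mul_exp_neg {g : ℝ → ℝ} {σ : ℝ} (hσ : 0 ≤ σ)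
    (hg : ∀ a b, IntervalIntegrable g volume a b)
    (hdiv : Tendsto (fun T => ∫ u in (0:ℝ)..T, g u * Real.exp (-(σ * u))) atTop atTop) (M : ℝ) :
    ∃ᶠ t in atTop, M ≤ ∫ u in (0:ℝ)..t, g u := by
  by_contra hbdd
  simp only [not_frequently, not_le] at hbdd
  obtain ⟨K, hK⟩ :=
    (intervalIntegral.continuous_primitive hg 0).bddAbove_image_Ici_of_eventually_le
      (hbdd.mono fun _ => le_of_lt) 0
  obtain ⟨T, hT, hT0⟩ := ((hdiv.eventually_gt_atTop K).and (eventually_ge_atTop 0)).exists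
  have hle := integral_mul_exp_neg_le hσ hT0 (hg 0 T) fun t ht => hK ⟨t, ht.1, rfl⟩
  rw [mul_zero, neg_zero, Real.exp_zero, one_mul] at hle
  linarith

lemma firingSet_nonempty {σ : ℝ} {f : ℝ → ℝ}
    (hg : ∀ a b, IntervalIntegrable (fun u => (f u - σ) * Real.exp (σ * u)) volume a b)
    (hunbounded : ∀ M : ℝ, ∃ᶠ t in atTop, M ≤ ∫ u in (0:ℝ)..t, (f u - σ) * Real.exp (σ * u))
    (t : ℝ) : (FiringSet σ f t).Nonempty := by
  obtain ⟨t', hlarge, htt'⟩ :=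
    ((hunbounded (Real.exp (σ * t) + ∫ u in (0:ℝ)..t, (f u - σ) * Real.exp (σ * u))
      ).and_eventually (eventually_gt_atTop t)).exists
  refine ⟨t', htt', ?_⟩
  have := intervalIntegral.integral_add_adjacent_intervals (hg 0 t) (hg t t')
  linarith

theorem stmt1 (σ : ℝ) (hσ : 0 ≤ σ) (f : ℝ → ℝ) (hf : LocallyIntegrable f volume)
    (hmean :
      (∃ m : ℝ, σ < m ∧
          Tendsto (fun T => (1 / T) * ∫ u in (0:ℝ)..T, f u) atTop (nhds m)) ∨
        Tendsto (fun T => (1 / T) * ∫ u in (0:ℝ)..T, f u) atTop atTop) :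
    (∀ M : ℝ, ∃ᶠ t in atTop, M ≤ ∫ u in (0:ℝ)..t, (f u - σ) * Real.exp (σ * u)) ∧
      ∀ t : ℝ, (FiringSet σ f t).Nonempty := by
  have hfi (a b : ℝ) : IntervalIntegrable f volume a b :=
    (hf.integrableOn_isCompact isCompact_uIcc).intervalIntegrable
  have hgi (a b : ℝ) : IntervalIntegrable (fun u => (f u - σ) * Real.exp (σ * u)) volume a b :=
    ((hfi a b).sub intervalIntegrable_const).mul_continuousOn (by fun_prop)
  have hweighted (T : ℝ) :
      ∫ u in (0:ℝ)..T, (f u - σ) * Real.exp (σ * u) * Real.exp (-(σ * u)) =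
        (∫ u in (0:ℝ)..T, f u) - σ * T := by
    simp only [mul_assoc, ← Real.exp_add, add_neg_cancel, Real.exp_zero, mul_one]
    rw [intervalIntegral.integral_sub (hfi 0 T) intervalIntegrable_const]
    simp [mul_comm]
  have hunbounded := frequently_le_integral_of_tendsto_integral_mul_exp_neg hσ hgi
    (by simpa only [hweighted] using tendsto_sub_mul_atTop_of_mean hmean)
  exact ⟨hunbounded, firingSet_nonempty hgi hunbounded⟩
end
end

section
/- Let σ ≥ 0, ς > 0 and let f : ℝ → ℝ be locally integrable with f(t) − σ ≥ ς for a.e. t. Then the displacement map Ψ(t) = Φ(t) − t of the LIF firing map satisfies 0 < Ψ(t) ≤ 1/ς for all t ∈ ℝ; in particular Ψ is bounded. -/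
open MeasureTheory Filter Set intervalIntegral

noncomputable section

/-! Since `f - σ ≥ ς` and `e^{σu} ≥ e^{σt}` on `[t, Φ t]`, the defining identity gives
`e^{σt} ≥ ς (Φ t - t) e^{σt}`. The identity also forces integrability: the integral equals
`e^{σt} ≠ 0`, so it is not the junk value `0`. -/

lemma mul_sub_mul_exp_le_integral_mul_exp {σ ς a b : ℝ} {g : ℝ → ℝ}
    (hσ : 0 ≤ σ) (hς : 0 ≤ ς) (hab : a ≤ b) (hg : ∀ᵐ u, ς ≤ g u)
    (hint : IntervalIntegrable (fun u => g u * Real.exp (σ * u)) volume a b) :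
    ς * (b - a) * Real.exp (σ * a) ≤ ∫ u in a..b, g u * Real.exp (σ * u) := by
  have hpointwise : ∀ᵐ u ∂volume.restrict (Icc a b),
      ς * Real.exp (σ * a) ≤ g u * Real.exp (σ * u) := by
    filter_upwards [ae_restrict_of_ae hg, ae_restrict_mem measurableSet_Icc] with u hu hmem
    have hexp : Real.exp (σ * a) ≤ Real.exp (σ * u) :=
      Real.exp_le_exp.mpr (mul_le_mul_of_nonneg_left hmem.1 hσ)
    exact mul_le_mul hu hexp (Real.exp_pos _).le (hς.trans hu)
  calc ς * (b - a) * Real.exp (σ * a) = ∫ _ in a..b, ς * Real.exp (σ * a) := by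
        rw [intervalIntegral.integral_const, smul_eq_mul]; ring
    _ ≤ ∫ u in a..b, g u * Real.exp (σ * u) :=
        integral_mono_ae_restrict hab intervalIntegrable_const hint hpointwise

theorem stmt3_general (σ ς : ℝ) (hσ : 0 ≤ σ) (hς : 0 < ς) (f : ℝ → ℝ)
    (hb : ∀ᵐ t, σ + ς ≤ f t)
    (Φ : ℝ → ℝ) (hΦ : ∀ t, FiringEq σ f t (Φ t)) :
    ∀ t, 0 < Φ t - t ∧ Φ t - t ≤ 1 / ς := by
  intro t
  obtain ⟨⟨hlt, heq⟩, -⟩ := hΦ t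
  have hint : IntervalIntegrable (fun u => (f u - σ) * Real.exp (σ * u)) volume t (Φ t) :=
    intervalIntegrable_of_integral_ne_zero (heq ▸ (Real.exp_pos _).ne')
  have hlower := mul_sub_mul_exp_le_integral_mul_exp hσ hς.le hlt.le
    (hb.mono fun u hu => by linarith) hint
  rw [← heq, mul_le_iff_le_one_left (Real.exp_pos _)] at hlower
  exact ⟨sub_pos.mpr hlt, (le_div_iff₀' hς).mpr hlower⟩

theorem stmt3 (σ ς : ℝ) (hσ : 0 ≤ σ) (hς : 0 < ς) (f : ℝ → ℝ)
    (hf : LocallyIntegrable f volume) (hb : ∀ᵐ t, σ + ς ≤ f t)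
    (Φ : ℝ → ℝ) (hΦ : ∀ t, FiringEq σ f t (Φ t)) :
    ∀ t, 0 < Φ t - t ∧ Φ t - t ≤ 1 / ς :=
  stmt3_general σ ς hσ hς f hb Φ hΦ
end
end

section
/- Let σ ≥ 0 and let f : ℝ → ℝ be locally integrable and ω-periodic (ω > 0). If the firing map Φ of the LIF model driven by f is well-defined for every t ∈ ℝ, then Φ(t + ω) = Φ(t) + ω for all t ∈ ℝ; consequently the displacement Ψ(t) = Φ(t) − t is ω-periodic. -/
open MeasureTheory Filter Set intervalIntegral

noncomputable section

/-!
Substituting `u ↦ u + ω` and using periodicity of `f`, the integral over `[t + ω, t' + ω]`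
is `e^{σω}` times the integral over `[t, t']`, which is exactly the factor relating
`e^{σ(t + ω)}` to `e^{σt}`. Hence the firing set at `t + ω` is the translate by `ω` of the
firing set at `t`, and infima commute with translation.
-/

section Periodic

variable {σ ω : ℝ} {f : ℝ → ℝ}

lemma integral_sub_mul_exp_add_period (hper : Function.Periodic f ω) (a b : ℝ) :
    ∫ u in a + ω..b + ω, (f u - σ) * Real.exp (σ * u) =
      Real.exp (σ * ω) * ∫ u in a..b, (f u - σ) * Real.exp (σ * u) := by
  rw [← integral_comp_add_right (fun u => (f u - σ) * Real.exp (σ * u)),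
    ← intervalIntegral.integral_const_mul]
  congr 1 with u
  rw [hper u, mul_add, Real.exp_add]
  ring

lemma add_period_mem_firingSet_iff (hper : Function.Periodic f ω) (t x : ℝ) :
    x + ω ∈ FiringSet σ f (t + ω) ↔ x ∈ FiringSet σ f t := by
  simp only [FiringSet, mem_ofPred_eq, add_lt_add_iff_right,
    integral_sub_mul_exp_add_period hper, mul_add, Real.exp_add, mul_comm (Real.exp (σ * t)),
    mul_le_mul_iff_right₀ (Real.exp_pos (σ * ω))]

lemma firingSet_add_period (hper : Function.Periodic f ω) (t : ℝ) :
    FiringSet σ f (t + ω) = (· + ω) '' FiringSet σ f t := by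
  ext x
  rw [← sub_add_cancel x ω, add_period_mem_firingSet_iff hper,
    (add_left_injective ω).mem_set_image]

lemma bddBelow_firingSet (σ : ℝ) (f : ℝ → ℝ) (t : ℝ) : BddBelow (FiringSet σ f t) :=
  ⟨t, fun _ hx => hx.1.le⟩

lemma sInf_firingSet_add_period (hper : Function.Periodic f ω) {t : ℝ}
    (hne : (FiringSet σ f t).Nonempty) :
    sInf (FiringSet σ f (t + ω)) = sInf (FiringSet σ f t) + ω := by
  rw [firingSet_add_period hper]
  exact ((OrderIso.addRight ω).map_csInf' hne (bddBelow_firingSet σ f t)).symm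

end Periodic

theorem stmt6_general (σ ω : ℝ) (f : ℝ → ℝ)
    (hper : Function.Periodic f ω)
    (hwd : ∀ t, (FiringSet σ f t).Nonempty) :
    (∀ t, sInf (FiringSet σ f (t + ω)) = sInf (FiringSet σ f t) + ω) ∧
      Function.Periodic (fun t => sInf (FiringSet σ f t) - t) ω := by
  have hshift (t : ℝ) := sInf_firingSet_add_period hper (hwd t)
  refine ⟨hshift, fun t => ?_⟩
  simp only [hshift t]
  ring

theorem stmt6 (σ ω : ℝ) (hσ : 0 ≤ σ) (hω : 0 < ω) (f : ℝ → ℝ)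
    (hf : LocallyIntegrable f volume) (hper : Function.Periodic f ω)
    (hwd : ∀ t, (FiringSet σ f t).Nonempty) :
    (∀ t, sInf (FiringSet σ f (t + ω)) = sInf (FiringSet σ f t) + ω) ∧
      Function.Periodic (fun t => sInf (FiringSet σ f t) - t) ω :=
  stmt6_general σ ω f hper hwd
end
end

section
/- Let σ ≥ 0 and let f : ℝ → ℝ be limit-periodic (a uniform limit on ℝ of continuous periodic functions) with f(t) − σ > ς for all t, for some ς > 0. Then the displacement map Ψ of the firing map of the LIF model driven by f is limit-periodic. -/
open MeasureTheory Filter Set intervalIntegral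

noncomputable section

/-!
With the potential `V(s) = ∫₀ˢ (g u - σ) e^{σu} du` the firing equation reads
`V(y) = V(t) + e^{σt}`. If `g - σ ≥ c > 0`, then `V` grows at rate at least `c e^{σt}` beyond `t`,
so the firing time exists and is unique, the firing map is a monotone surjection of `ℝ` (hence
continuous), it commutes with the period of a periodic input, and a uniform perturbation `δ` of
the input moves it by at most `δ / (c₁ c₂)`. Uniform continuous periodic approximants of `f`
therefore yield uniform continuous periodic approximants of `Ψ`.
-/

open Real Function

def lifDrive (σ : ℝ) (g : ℝ → ℝ) (u : ℝ) : ℝ := (g u - σ) * exp (σ * u)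

def lifPotential (σ : ℝ) (g : ℝ → ℝ) (s : ℝ) : ℝ := ∫ u in (0 : ℝ)..s, lifDrive σ g u

section LIF

variable {σ c a b t y z p δ : ℝ} {f g : ℝ → ℝ}

theorem continuous_lifDrive (hg : Continuous g) : Continuous (lifDrive σ g) := by
  unfold lifDrive
  fun_prop

theorem continuous_lifPotential (hg : Continuous g) : Continuous (lifPotential σ g) :=
  continuous_primitive (fun a b => (continuous_lifDrive hg).intervalIntegrable a b) 0

theorem lifPotential_sub (hg : Continuous g) (a b : ℝ) :
    lifPotential σ g b - lifPotential σ g a = ∫ u in a..b, lifDrive σ g u :=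
  integral_interval_sub_left ((continuous_lifDrive hg).intervalIntegrable _ _)
    ((continuous_lifDrive hg).intervalIntegrable _ _)

theorem strictMono_lifPotential (hg : Continuous g) (hgσ : ∀ u, σ < g u) :
    StrictMono (lifPotential σ g) := fun a b hab => by
  rw [← sub_pos, lifPotential_sub hg]
  exact intervalIntegral_pos_of_pos_on ((continuous_lifDrive hg).intervalIntegrable _ _)
    (fun u _ => mul_pos (sub_pos.2 (hgσ u)) (exp_pos _)) hab

theorem firingEq_iff (hg : Continuous g) (hgσ : ∀ u, σ < g u) :
    FiringEq σ g t y ↔ lifPotential σ g y = lifPotential σ g t + exp (σ * t) := by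
  have hV := strictMono_lifPotential hg hgσ
  have key : ∀ s, exp (σ * t) = ∫ u in t..s, (g u - σ) * exp (σ * u) ↔
      lifPotential σ g s = lifPotential σ g t + exp (σ * t) := fun s => by
    rw [show (∫ u in t..s, (g u - σ) * exp (σ * u)) = lifPotential σ g s - lifPotential σ g t
      from (lifPotential_sub hg t s).symm]
    constructor <;> intro h <;> linarith
  refine ⟨fun h => (key y).1 h.1.2, fun h => ⟨⟨?_, (key y).2 h⟩, fun z hz => ?_⟩⟩
  · exact hV.lt_iff_lt.1 (by linarith [exp_pos (σ * t)])
  · exact (hV.injective (((key z).1 hz.2).trans h.symm)).ge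

theorem exp_mul_mul_sub_le_integral_exp (hσ : 0 ≤ σ) (hab : a ≤ b) :
    exp (σ * a) * (b - a) ≤ ∫ u in a..b, exp (σ * u) := by
  have h := integral_mono_on hab (intervalIntegrable_const (μ := volume))
    ((by fun_prop : Continuous fun u => exp (σ * u)).intervalIntegrable a b)
    (fun u hu => exp_le_exp.2 (mul_le_mul_of_nonneg_left hu.1 hσ))
  simpa [mul_comm] using h

theorem mul_integral_exp_le_lifPotential_sub (hg : Continuous g) (hgc : ∀ u, c ≤ g u - σ)
    (hab : a ≤ b) :
    c * ∫ u in a..b, exp (σ * u) ≤ lifPotential σ g b - lifPotential σ g a := by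
  rw [lifPotential_sub hg, ← intervalIntegral.integral_const_mul]
  exact integral_mono_on hab
    ((by fun_prop : Continuous fun u => c * exp (σ * u)).intervalIntegrable a b)
    ((continuous_lifDrive hg).intervalIntegrable a b)
    (fun u _ => mul_le_mul_of_nonneg_right (hgc u) (exp_pos _).le)

theorem lifPotential_add_exp_le (hσ : 0 ≤ σ) (hg : Continuous g) (hc : 0 < c)
    (hgc : ∀ u, c ≤ g u - σ) (s : ℝ) :
    lifPotential σ g s + exp (σ * s) ≤ lifPotential σ g (s + c⁻¹) := by
  have hs : s ≤ s + c⁻¹ := le_add_of_nonneg_right (inv_pos.2 hc).le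
  have h := mul_le_mul_of_nonneg_left (exp_mul_mul_sub_le_integral_exp hσ hs) hc.le
  have hcancel : c * (exp (σ * s) * (s + c⁻¹ - s)) = exp (σ * s) := by field_simp; ring
  linarith [mul_integral_exp_le_lifPotential_sub hg hgc hs]

theorem mul_exp_mul_abs_sub_le (hσ : 0 ≤ σ) (hg : Continuous g) (hc : 0 ≤ c)
    (hgc : ∀ u, c ≤ g u - σ) (ha : t ≤ a) (hb : t ≤ b) :
    c * exp (σ * t) * |b - a| ≤ |lifPotential σ g b - lifPotential σ g a| := by
  wlog hab : a ≤ b generalizing a b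
  · rw [abs_sub_comm, abs_sub_comm (lifPotential σ g b)]
    exact this hb ha (le_of_not_ge hab)
  rw [abs_of_nonneg (sub_nonneg.2 hab)]
  refine le_trans ?_ (le_abs_self _)
  calc c * exp (σ * t) * (b - a) ≤ c * (exp (σ * a) * (b - a)) := by
        rw [← mul_assoc]
        gcongr
    _ ≤ c * ∫ u in a..b, exp (σ * u) := 
        mul_le_mul_of_nonneg_left (exp_mul_mul_sub_le_integral_exp hσ hab) hc
    _ ≤ _ := mul_integral_exp_le_lifPotential_sub hg hgc hab

theorem abs_lifPotential_sub_sub_le (hf : Continuous f) (hg : Continuous g)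
    (hδ : ∀ u, |f u - g u| ≤ δ) (hab : a ≤ b) :
    |(lifPotential σ f b - lifPotential σ f a) - (lifPotential σ g b - lifPotential σ g a)| ≤
      δ * ∫ u in a..b, exp (σ * u) := by
  rw [lifPotential_sub hf, lifPotential_sub hg, ← integral_sub
    ((continuous_lifDrive hf).intervalIntegrable a b)
    ((continuous_lifDrive hg).intervalIntegrable a b), ← intervalIntegral.integral_const_mul,
    ← norm_eq_abs]
  refine norm_integral_le_of_norm_le hab (ae_of_all _ fun u _ => ?_)
    ((by fun_prop : Continuous fun u => δ * exp (σ * u)).intervalIntegrable a b)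
  rw [show lifDrive σ f u - lifDrive σ g u = (f u - g u) * exp (σ * u) by
    simp only [lifDrive]; ring, norm_mul, norm_of_nonneg (exp_pos _).le]
  exact mul_le_mul_of_nonneg_right (hδ u) (exp_pos _).le

theorem exists_firingEq (hσ : 0 ≤ σ) (hg : Continuous g) (hc : 0 < c)
    (hgc : ∀ u, c ≤ g u - σ) (t : ℝ) : ∃ y, FiringEq σ g t y := by
  have hgσ : ∀ u, σ < g u := fun u => by linarith [hgc u]
  obtain ⟨y, -, hy⟩ := intermediate_value_Icc (le_add_of_nonneg_right (inv_pos.2 hc).le)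
    (continuous_lifPotential (σ := σ) hg).continuousOn
    ⟨by linarith [exp_pos (σ * t)], lifPotential_add_exp_le hσ hg hc hgc t⟩
  exact ⟨y, (firingEq_iff hg hgσ).2 hy⟩

theorem continuous_of_firingEq (hσ : 0 ≤ σ) (hg : Continuous g) (hc : 0 < c)
    (hgc : ∀ u, c ≤ g u - σ) {G : ℝ → ℝ} (hG : ∀ t, FiringEq σ g t (G t)) : Continuous G := by
  have hgσ : ∀ u, σ < g u := fun u => by linarith [hgc u]
  have hV := strictMono_lifPotential (σ := σ) hg hgσ
  have hVG : ∀ t, lifPotential σ g (G t) = lifPotential σ g t + exp (σ * t) :=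
    fun t => (firingEq_iff hg hgσ).1 (hG t)
  have hH : Continuous fun t => lifPotential σ g t + exp (σ * t) :=
    (continuous_lifPotential hg).add (by fun_prop)
  refine Monotone.continuous_of_surjective (fun a b hab => hV.le_iff_le.1 ?_) fun y => ?_
  · rw [hVG, hVG]
    exact add_le_add (hV.monotone hab) (exp_le_exp.2 (mul_le_mul_of_nonneg_left hab hσ))
  · have hlow := lifPotential_add_exp_le hσ hg hc hgc (y - c⁻¹)
    rw [sub_add_cancel] at hlow
    obtain ⟨t, -, ht⟩ := intermediate_value_Icc (sub_le_self y (inv_pos.2 hc).le) hH.continuousOn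
      ⟨hlow, le_add_of_nonneg_right (exp_pos (σ * y)).le⟩
    exact ⟨t, (hG t).unique ((firingEq_iff hg hgσ).2 ht.symm)⟩

theorem Function.Periodic.lifPotential_add (hg : Continuous g) (hper : Periodic g p) (a b : ℝ) :
    lifPotential σ g (b + p) - lifPotential σ g (a + p) =
      exp (σ * p) * (lifPotential σ g b - lifPotential σ g a) := by
  rw [lifPotential_sub hg, lifPotential_sub hg, ← integral_comp_add_right,
    ← intervalIntegral.integral_const_mul]
  congr 1
  ext u
  simp only [lifDrive, hper u, mul_add, exp_add]
  ring

theorem firingEq_add_period (hg : Continuous g) (hgσ : ∀ u, σ < g u) (hper : Periodic g p)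
    (h : FiringEq σ g t y) : FiringEq σ g (t + p) (y + p) := by
  rw [firingEq_iff hg hgσ] at h ⊢
  rw [mul_add, exp_add]
  linear_combination hper.lifPotential_add hg t y + exp (σ * p) * h

theorem abs_sub_le_of_firingEq (hσ : 0 ≤ σ) (hf : Continuous f) (hg : Continuous g)
    {c₁ c₂ : ℝ} (hc₁ : 0 < c₁) (hc₂ : 0 < c₂) (hfc : ∀ u, c₁ ≤ f u - σ) (hgc : ∀ u, c₂ ≤ g u - σ)
    (hδ : ∀ u, |f u - g u| ≤ δ) (hy : FiringEq σ f t y) (hz : FiringEq σ g t z) :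
    |y - z| ≤ δ / (c₁ * c₂) := by
  have hy' := (firingEq_iff hf fun u => by linarith [hfc u]).1 hy
  have hz' := (firingEq_iff hg fun u => by linarith [hgc u]).1 hz
  have hE := exp_pos (σ * t)
  have hδ0 : 0 ≤ δ := (abs_nonneg _).trans (hδ t)
  -- `g` gains exactly `e^{σt}` on `[t, z]`, which bounds the weight `∫_t^z e^{σu}`.
  have hweight : c₂ * ∫ u in t..z, exp (σ * u) ≤ exp (σ * t) := by
    linarith [mul_integral_exp_le_lifPotential_sub hg hgc hz.1.1.le]
  have hclose := abs_lifPotential_sub_sub_le (σ := σ) hf hg hδ hz.1.1.le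
  have hsep := mul_exp_mul_abs_sub_le hσ hf hc₁.le hfc hy.1.1.le hz.1.1.le
  rw [show lifPotential σ f z - lifPotential σ f y = (lifPotential σ f z - lifPotential σ f t) -
    (lifPotential σ g z - lifPotential σ g t) by linarith, abs_sub_comm z] at hsep
  rw [le_div_iff₀ (mul_pos hc₁ hc₂)]
  refine le_of_mul_le_mul_left ?_ hE
  calc exp (σ * t) * (|y - z| * (c₁ * c₂)) = c₂ * (c₁ * exp (σ * t) * |y - z|) := by ring
    _ ≤ c₂ * (δ * ∫ u in t..z, exp (σ * u)) :=
        mul_le_mul_of_nonneg_left (hsep.trans hclose) hc₂.le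
    _ = δ * (c₂ * ∫ u in t..z, exp (σ * u)) := by ring
    _ ≤ δ * exp (σ * t) := mul_le_mul_of_nonneg_left hweight hδ0
    _ = exp (σ * t) * δ := mul_comm _ _

end LIF

theorem LimitPeriodic.continuous {g : ℝ → ℝ} (hg : LimitPeriodic g) : Continuous g := by
  obtain ⟨gn, hgn, hconv⟩ := hg
  exact hconv.continuous (Eventually.of_forall fun n => (hgn n).1).frequently

theorem limitPeriodic_iff {g : ℝ → ℝ} : LimitPeriodic g ↔ ∀ ε > 0, ∃ h : ℝ → ℝ,
    Continuous h ∧ (∃ p > 0, Periodic h p) ∧ ∀ t, |g t - h t| ≤ ε := by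
  constructor
  · rintro ⟨gn, hgn, hconv⟩ ε hε
    obtain ⟨n, hn⟩ := (Metric.tendstoUniformly_iff.1 hconv ε hε).exists
    exact ⟨gn n, (hgn n).1, (hgn n).2, fun t => (hn t).le⟩
  · intro h
    choose gn hgn hper happrox using fun n : ℕ => h (1 / (n + 1)) Nat.one_div_pos_of_nat
    refine ⟨gn, fun n => ⟨hgn n, hper n⟩, Metric.tendstoUniformly_iff.2 fun ε hε => ?_⟩
    obtain ⟨N, hN⟩ := exists_nat_one_div_lt hε
    filter_upwards [eventually_ge_atTop N] with n hn t
    calc dist (g t) (gn n t) = |g t - gn n t| := Real.dist_eq _ _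
      _ ≤ 1 / (n + 1) := happrox n t
      _ ≤ 1 / (N + 1) := by gcongr
      _ < ε := hN

theorem stmt7 (σ ς : ℝ) (hσ : 0 ≤ σ) (hς : 0 < ς) (f : ℝ → ℝ)
    (hlp : LimitPeriodic f) (hb : ∀ t, σ + ς < f t)
    (Φ : ℝ → ℝ) (hΦ : ∀ t, FiringEq σ f t (Φ t)) :
    LimitPeriodic (fun t => Φ t - t) := by
  have hf := hlp.continuous
  rw [limitPeriodic_iff] at hlp ⊢
  intro ε hε
  set δ := min (ς / 2) (ς * (ς / 2) * ε)
  obtain ⟨g, hg, ⟨p, hp, hper⟩, hfg⟩ := hlp δ (by positivity)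
  have hgc : ∀ u, ς / 2 ≤ g u - σ := fun u => by
    linarith [hb u, (abs_le.1 ((hfg u).trans (min_le_left _ _))).2]
  choose G hG using exists_firingEq hσ hg (half_pos hς) hgc
  refine ⟨fun t => G t - t, (continuous_of_firingEq hσ hg (half_pos hς) hgc hG).sub continuous_id,
    ⟨p, hp, fun t => ?_⟩, fun t => ?_⟩
  · have hgσ : ∀ u, σ < g u := fun u => by linarith [hgc u]
    simp only [(hG (t + p)).unique (firingEq_add_period hg hgσ hper (hG t))]
    ring
  · have hstab := abs_sub_le_of_firingEq hσ hf hg hς (half_pos hς)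
      (fun u => by linarith [hb u]) hgc hfg (hΦ t) (hG t)
    rw [sub_sub_sub_cancel_right]
    refine hstab.trans ((div_le_iff₀ (by positivity)).2 ?_)
    linarith [min_le_right (ς / 2) (ς * (ς / 2) * ε)]
end
end

section
/- Let f : ℝ → ℝ be locally integrable, μ-almost periodic and nonnegative a.e. If the mean value M{f} = lim_{T→+∞} (1/T)∫_0^T f(u) du exists and is 0, then f(t) = 0 for almost every t ∈ ℝ. -/
open MeasureTheory Filter Set intervalIntegral

noncomputable section

/-! If `f ≥ 0` is not a.e. zero, some unit interval `[u, u + 1]` meets `{f ≥ η}` in a set of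
measure `δ > 0`. For every `τ` with `D(η/2; f(· + τ), f) ≤ δ/2`, the translated window
`[u + τ, u + τ + 1]` meets `{f ≥ η/2}` in measure at least `δ/2`, so `f` integrates to at least
`ηδ/4` over it. These `τ` are relatively dense, say with gaps `< L`, so every interval of length
`L + 1` carries integral `≥ ηδ/4`, and the mean of `f` is at least `ηδ/(4(L + 1)) > 0`. -/

theorem volume_sep_Icc_ne_top (a b : ℝ) (p : ℝ → Prop) : volume {t ∈ Icc a b | p t} ≠ ⊤ :=
  measure_ne_top_of_subset (sep_subset _ _) measure_Icc_lt_top.ne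

theorem exists_volume_sep_Icc_le_ne_zero {f : ℝ → ℝ} (hf : ¬ ∀ᵐ t, f t ≤ 0) :
    ∃ η > 0, ∃ u : ℝ, volume {t ∈ Icc u (u + 1) | η ≤ f t} ≠ 0 := by
  by_contra! h
  refine hf <| ae_iff.2 <| measure_mono_null (fun t ht => ?_) <| measure_iUnion_null fun n : ℕ =>
    measure_iUnion_null fun k : ℤ => h (1 / (n + 1)) (by positivity) k
  obtain ⟨n, hn⟩ := exists_nat_one_div_lt (not_le.1 ht)
  exact mem_iUnion₂.2 ⟨n, ⌊t⌋, ⟨Int.floor_le t, (Int.lt_floor_add_one t).le⟩, hn.le⟩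

theorem measureReal_sep_Icc_le_Dfun (η : ℝ) (f g : ℝ → ℝ) (u : ℝ) :
    volume.real {t ∈ Icc u (u + 1) | η ≤ |f t - g t|} ≤ Dfun η f g := by
  refine le_ciSup (f := fun u => volume.real {t ∈ Icc u (u + 1) | η ≤ |f t - g t|}) ⟨1, ?_⟩ u
  rintro _ ⟨v, rfl⟩
  calc volume.real {t ∈ Icc v (v + 1) | η ≤ |f t - g t|}
      ≤ volume.real (Icc v (v + 1)) := measureReal_mono (sep_subset _ _) measure_Icc_lt_top.ne
    _ = 1 := by simp

theorem measureReal_sep_Icc_sub_Dfun_le (f : ℝ → ℝ) (η u τ : ℝ) :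
    volume.real {t ∈ Icc u (u + 1) | η ≤ f t} - Dfun (η / 2) (fun t => f (t + τ)) f ≤
      volume.real {t ∈ Icc (u + τ) (u + τ + 1) | η / 2 ≤ f t} := by
  set B := {t ∈ Icc u (u + 1) | η / 2 ≤ |f (t + τ) - f t|}
  set C := {t ∈ Icc u (u + 1) | η / 2 ≤ f (t + τ)}
  have hsub : {t ∈ Icc u (u + 1) | η ≤ f t} ⊆ B ∪ C := by
    rintro t ⟨ht, hηt⟩
    by_cases hB : η / 2 ≤ |f (t + τ) - f t|
    · exact Or.inl ⟨ht, hB⟩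
    · exact Or.inr ⟨ht, by linarith [(abs_lt.1 (not_le.1 hB)).1]⟩
  have hC : volume.real C = volume.real {t ∈ Icc (u + τ) (u + τ + 1) | η / 2 ≤ f t} := by
    have : C = (· + τ) ⁻¹' {t ∈ Icc (u + τ) (u + τ + 1) | η / 2 ≤ f t} := by
      ext t
      simp only [C, mem_preimage, mem_ofPred_eq, mem_Icc]
      constructor <;> rintro ⟨⟨h₁, h₂⟩, h₃⟩ <;> exact ⟨⟨by linarith, by linarith⟩, h₃⟩
    rw [this, Measure.real, measure_preimage_add_right, Measure.real]
  have hB : volume.real B ≤ Dfun (η / 2) (fun t => f (t + τ)) f :=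
    measureReal_sep_Icc_le_Dfun _ _ _ u
  have hBC := (measureReal_mono hsub (measure_union_ne_top (volume_sep_Icc_ne_top _ _ _)
    (volume_sep_Icc_ne_top _ _ _))).trans (measureReal_union_le B C)
  linarith

theorem mul_measureReal_sep_Icc_le_setIntegral {f : ℝ → ℝ} (hf : LocallyIntegrable f volume)
    (hpos : ∀ᵐ t, 0 ≤ f t) (η a b : ℝ) :
    η * volume.real {t ∈ Icc a b | η ≤ f t} ≤ ∫ t in Icc a b, f t := by
  have := mul_meas_ge_le_integral_of_nonneg (μ := volume.restrict (Icc a b))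
    (ae_restrict_of_ae hpos) (hf.integrableOn_isCompact isCompact_Icc) η
  rwa [measureReal_restrict_apply' measurableSet_Icc, inter_comm] at this

theorem RelDense.exists_forall_le_intervalIntegral {E : Set ℝ} (hE : RelDense E) {f : ℝ → ℝ}
    (hf : LocallyIntegrable f volume) (hpos : ∀ᵐ t, 0 ≤ f t) {c u : ℝ}
    (hc : ∀ τ ∈ E, c ≤ ∫ t in Icc (u + τ) (u + τ + 1), f t) :
    ∃ p > 0, ∀ x, c ≤ ∫ t in x..x + p, f t := by
  obtain ⟨L, hL, hLE⟩ := hE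
  refine ⟨L + 1, by linarith, fun x => ?_⟩
  obtain ⟨τ, hτE, hxτ, hτx⟩ := hLE (x - u)
  rw [integral_of_le (by linarith), ← integral_Icc_eq_integral_Ioc]
  exact (hc τ hτE).trans <| setIntegral_mono_set (hf.integrableOn_isCompact isCompact_Icc)
    (ae_restrict_of_ae hpos) (Icc_subset_Icc (by linarith) (by linarith)).eventuallyLE

theorem nonpos_of_forall_le_intervalIntegral_of_tendsto {f : ℝ → ℝ}
    (hf : LocallyIntegrable f volume) {c p : ℝ} (hp : 0 < p)
    (hc : ∀ x, c ≤ ∫ t in x..x + p, f t)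
    (hmean : Tendsto (fun T => (1 / T) * ∫ u in (0:ℝ)..T, f u) atTop (nhds 0)) : c ≤ 0 := by
  have hsum (n : ℕ) : n * c ≤ ∫ t in (0:ℝ)..n * p, f t :=
    calc n * c = ∑ _k ∈ Finset.range n, c := by simp
      _ ≤ ∑ k ∈ Finset.range n, ∫ t in k * p..(k + 1 : ℕ) * p, f t :=
        Finset.sum_le_sum fun k _ => by simpa [add_mul] using hc (k * p)
      _ = ∫ t in ((0 : ℕ) : ℝ) * p..n * p, f t :=
        sum_integral_adjacent_intervals fun _ _ =>
          (hf.integrableOn_isCompact isCompact_uIcc).intervalIntegrable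
      _ = ∫ t in (0:ℝ)..n * p, f t := by simp
  have hmean_le : c / p ≤ 0 := by
    refine ge_of_tendsto (hmean.comp (tendsto_natCast_atTop_atTop.atTop_mul_const hp))
      ((eventually_ge_atTop 1).mono fun n hn_one => ?_)
    have hn : (0 : ℝ) < n := by exact_mod_cast hn_one
    calc c / p = 1 / (n * p) * (n * c) := by field_simp
      _ ≤ 1 / (n * p) * ∫ t in (0:ℝ)..n * p, f t := by gcongr; exact hsum n
  simpa using (div_le_iff₀ hp).1 hmean_le

theorem stmt10 (f : ℝ → ℝ) (hf : LocallyIntegrable f volume) (hap : MuAP f)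
    (hpos : ∀ᵐ t, 0 ≤ f t)
    (hmean : Tendsto (fun T => (1 / T) * ∫ u in (0:ℝ)..T, f u) atTop (nhds 0)) :
    ∀ᵐ t, f t = 0 := by
  have hle : ∀ᵐ t, f t ≤ 0 := by
    by_contra h
    obtain ⟨η, hη, u, hA⟩ := exists_volume_sep_Icc_le_ne_zero h
    set δ := volume.real {t ∈ Icc u (u + 1) | η ≤ f t}
    have hδ : 0 < δ := ENNReal.toReal_pos hA (volume_sep_Icc_ne_top _ _ _)
    have hwindow : ∀ τ ∈ {τ | Dfun (η / 2) (fun t => f (t + τ)) f ≤ δ / 2},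
        η / 2 * (δ / 2) ≤ ∫ t in Icc (u + τ) (u + τ + 1), f t := fun τ hτ =>
      calc η / 2 * (δ / 2)
          ≤ η / 2 * volume.real {t ∈ Icc (u + τ) (u + τ + 1) | η / 2 ≤ f t} := by
            gcongr
            linarith [measureReal_sep_Icc_sub_Dfun_le f η u τ, mem_ofPred.1 hτ]
        _ ≤ _ := mul_measureReal_sep_Icc_le_setIntegral hf hpos _ _ _
    obtain ⟨p, hp, hp_le⟩ :=
      (hap _ (half_pos hδ) _ (half_pos hη)).exists_forall_le_intervalIntegral hf hpos hwindow
    exact (nonpos_of_forall_le_intervalIntegral_of_tendsto hf hp hp_le hmean).not_gt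
      (by positivity)
  filter_upwards [hpos, hle] with t h₁ h₂ using le_antisymm h₂ h₁
end
end

section
/- If f : ℝ → ℝ is μ-almost periodic, then for every ε, η > 0 the set of integer (ε,η)-almost periods μE{ε,η,f} ∩ ℤ is relatively dense in ℝ. -/
open MeasureTheory Filter Set intervalIntegral

noncomputable section

/-!
The μ-almost periods form an approximate group: `E(ε₁, η₁) + E(ε₂, η₂) ⊆ E(ε₁ + ε₂, η₁ + η₂)`
and `-E(ε, η) = E(ε, η)`, by the triangle inequality and translation invariance of `D`.
Translation is continuous in measure on bounded intervals (truncate `f`, then approximate the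
truncation in `L¹` by a compactly supported continuous function). Shifting a window `[u, u + 1]`
by an almost period `τ` with `u + τ ∈ [0, l]`, `l` an inclusion length, moves it into the fixed
interval `[0, l + 1]`, so every small `δ` is an almost period.
Finally, `ℝ/ℤ` is compact, so finitely many almost periods `ρ` represent every almost period `τ`
up to an integer and a small error `δ`, and `n = τ - δ - ρ` is an integer almost period within
bounded distance of `τ`.
-/

open scoped ENNReal Topology

def Dloc (η : ℝ) (f g : ℝ → ℝ) (u : ℝ) : ℝ≥0∞ :=
  volume {t ∈ Icc u (u + 1) | η ≤ |f t - g t|}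

section Discrepancy

variable {η η₁ η₂ ε : ℝ} {f g h : ℝ → ℝ} {u : ℝ}

lemma Dloc_le_one : Dloc η f g u ≤ 1 :=
  (measure_mono (sep_subset _ _)).trans (by simp [Real.volume_Icc])

lemma Dloc_ne_top : Dloc η f g u ≠ ∞ :=
  ne_top_of_le_ne_top ENNReal.one_ne_top Dloc_le_one

lemma Dloc_comm : Dloc η f g u = Dloc η g f u := by
  simp only [Dloc, abs_sub_comm]

lemma Dloc_add_le : Dloc (η₁ + η₂) f h u ≤ Dloc η₁ f g u + Dloc η₂ g h u := by
  refine (measure_mono ?_).trans (measure_union_le _ _)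
  rintro t ⟨ht, hη⟩
  by_contra hc
  simp only [mem_union, mem_sep_iff, not_or, not_and, not_le] at hc
  linarith [abs_sub_le (f t) (g t) (h t), hc.1 ht, hc.2 ht]

lemma Dloc_comp_add_right (a : ℝ) :
    Dloc η (fun t => f (t + a)) (fun t => g (t + a)) u = Dloc η f g (u + a) := by
  have : {t ∈ Icc u (u + 1) | η ≤ |f (t + a) - g (t + a)|} =
      (· + a) ⁻¹' {t ∈ Icc (u + a) (u + a + 1) | η ≤ |f t - g t|} := by
    ext t
    simp only [mem_preimage, mem_Icc]
    constructor <;> rintro ⟨⟨h₁, h₂⟩, h₃⟩ <;> exact ⟨⟨by linarith, by linarith⟩, h₃⟩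
  rw [Dloc, this, measure_preimage_add_right, Dloc]

lemma Dloc_toReal_le_Dfun : (Dloc η f g u).toReal ≤ Dfun η f g := by
  refine le_ciSup (f := fun v => (Dloc η f g v).toReal) ⟨1, ?_⟩ u
  rintro _ ⟨v, rfl⟩
  exact ENNReal.toReal_le_of_le_ofReal zero_le_one (by simpa using Dloc_le_one)

lemma Dfun_le_iff (hε : 0 ≤ ε) : Dfun η f g ≤ ε ↔ ∀ u, Dloc η f g u ≤ ENNReal.ofReal ε :=
  ⟨fun H _ => (ENNReal.le_ofReal_iff_toReal_le Dloc_ne_top hε).2 (Dloc_toReal_le_Dfun.trans H),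
    fun H => ciSup_le fun u => ENNReal.toReal_le_of_le_ofReal hε (H u)⟩

lemma Dfun_comm : Dfun η f g = Dfun η g f := by
  simp only [Dfun, abs_sub_comm]

lemma Dfun_add_le : Dfun (η₁ + η₂) f h ≤ Dfun η₁ f g + Dfun η₂ g h :=
  ciSup_le fun u => calc
    (Dloc (η₁ + η₂) f h u).toReal ≤ (Dloc η₁ f g u + Dloc η₂ g h u).toReal :=
      ENNReal.toReal_mono (ENNReal.add_ne_top.2 ⟨Dloc_ne_top, Dloc_ne_top⟩) Dloc_add_le
    _ = (Dloc η₁ f g u).toReal + (Dloc η₂ g h u).toReal :=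
      ENNReal.toReal_add Dloc_ne_top Dloc_ne_top
    _ ≤ Dfun η₁ f g + Dfun η₂ g h := add_le_add Dloc_toReal_le_Dfun Dloc_toReal_le_Dfun

lemma Dfun_comp_add_right (a : ℝ) :
    Dfun η (fun t => f (t + a)) (fun t => g (t + a)) = Dfun η f g := by
  change ⨆ u, (Dloc η _ _ u).toReal = ⨆ u, (Dloc η f g u).toReal
  simp_rw [Dloc_comp_add_right]
  exact (Equiv.addRight a).surjective.iSup_comp fun u => (Dloc η f g u).toReal

end Discrepancy

def almostPeriods (f : ℝ → ℝ) (ε η : ℝ) : Set ℝ :=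
  {τ | Dfun η (fun t => f (t + τ)) f ≤ ε}

section AlmostPeriods

variable {f : ℝ → ℝ} {ε ε₁ ε₂ η η₁ η₂ a b : ℝ}

lemma add_mem_almostPeriods (ha : a ∈ almostPeriods f ε₁ η₁) (hb : b ∈ almostPeriods f ε₂ η₂) :
    a + b ∈ almostPeriods f (ε₁ + ε₂) (η₁ + η₂) := by
  have hshift : Dfun η₁ (fun t => f (t + (a + b))) (fun t => f (t + b)) =
      Dfun η₁ (fun t => f (t + a)) f := by
    simp only [add_comm a b, ← add_assoc]
    exact Dfun_comp_add_right (f := fun s => f (s + a)) (g := f) b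
  exact Dfun_add_le.trans (add_le_add (hshift.trans_le ha) hb)

lemma neg_mem_almostPeriods (ha : a ∈ almostPeriods f ε η) : -a ∈ almostPeriods f ε η := by
  have : Dfun η (fun t => f (t + -a)) f = Dfun η (fun t => f (t + a)) f := by
    rw [Dfun_comm, ← Dfun_comp_add_right (f := fun s => f (s + a)) (g := f) (-a)]
    simp only [neg_add_cancel_right]
  exact this.trans_le ha

lemma sub_mem_almostPeriods (ha : a ∈ almostPeriods f ε₁ η₁) (hb : b ∈ almostPeriods f ε₂ η₂) :
    a - b ∈ almostPeriods f (ε₁ + ε₂) (η₁ + η₂) :=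
  sub_eq_add_neg a b ▸ add_mem_almostPeriods ha (neg_mem_almostPeriods hb)

end AlmostPeriods

section Truncation

variable {α : Type*} [MeasurableSpace α] {μ : Measure α} {f : α → ℝ} {J : Set α}

lemma tendsto_measure_le_abs_atTop (hf : Measurable f) (hJ : MeasurableSet J) (hJμ : μ J ≠ ∞) :
    Tendsto (fun M : ℝ => μ {s ∈ J | M ≤ |f s|}) atTop (𝓝 0) := by
  have hempty : ⋂ M : ℝ, {s ∈ J | M ≤ |f s|} = ∅ := by
    refine eq_empty_of_forall_notMem fun s hs => ?_
    linarith [(mem_iInter.1 hs (|f s| + 1)).2]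
  simpa [hempty, Function.comp_def] using
    tendsto_measure_iInter_atTop (μ := μ) (s := fun M : ℝ => {s ∈ J | M ≤ |f s|})
    (fun _ => (hJ.inter (measurableSet_le measurable_const hf.abs)).nullMeasurableSet)
    (fun _ _ hMM' _ hs => ⟨hs.1, hMM'.trans hs.2⟩)
    ⟨0, ne_top_of_le_ne_top hJμ (measure_mono (sep_subset _ _))⟩

lemma exists_integrable_measure_sep_ne_le (hf : Measurable f) (hJ : MeasurableSet J)
    (hJμ : μ J ≠ ∞) {e : ℝ≥0∞} (he : 0 < e) :
    ∃ g : α → ℝ, Integrable g μ ∧ μ {s ∈ J | g s ≠ f s} ≤ e := by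
  obtain ⟨M, hMe, hM⟩ :=
    (((tendsto_measure_le_abs_atTop hf hJ hJμ).eventually (gt_mem_nhds he)).and
      (eventually_ge_atTop 0)).exists
  refine ⟨J.indicator fun s => max (-M) (min M (f s)), ?_, ?_⟩
  · refine (integrable_indicator_iff hJ).2 <| Measure.integrableOn_of_bounded (M := M) hJμ
      (measurable_const.max (measurable_const.min hf)).aestronglyMeasurable <|
      .of_forall fun s => ?_
    rw [Real.norm_eq_abs, abs_le]
    exact ⟨le_max_left _ _, max_le (by linarith) (min_le_left _ _)⟩
  · refine (measure_mono ?_).trans hMe.le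
    rintro s ⟨hsJ, hs⟩
    refine ⟨hsJ, ?_⟩
    by_contra! hlt
    rw [abs_lt] at hlt
    rw [indicator_of_mem hsJ, min_eq_right hlt.2.le, max_eq_right hlt.1.le] at hs
    exact hs rfl

end Truncation

lemma MeasureTheory.Integrable.eventually_volume_le_abs_comp_add_sub_le {g : ℝ → ℝ}
    (hg : Integrable g) {κ : ℝ} (hκ : 0 < κ) {e : ℝ≥0∞} (he : 0 < e) :
    ∀ᶠ δ in 𝓝 0, volume {s | κ ≤ |g (s + δ) - g s|} ≤ e := by
  have hκ₃ : ENNReal.ofReal (κ / 3) ≠ 0 := by simpa using hκ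
  obtain ⟨φ, hφc, hφg, hφ, -⟩ := hg.exists_hasCompactSupport_lintegral_sub_le
    (mul_ne_zero hκ₃ (ENNReal.half_pos he.ne').ne')
  set B := {s | κ / 3 ≤ |g s - φ s|}
  have hB : volume B ≤ e / 2 := by
    have hB_eq : B = {s | ENNReal.ofReal (κ / 3) ≤ ‖g s - φ s‖ₑ} := by
      ext s
      simp only [B, mem_ofPred_eq, Real.enorm_eq_ofReal_abs,
        ENNReal.ofReal_le_ofReal_iff (abs_nonneg _)]
    rw [hB_eq]
    refine (ENNReal.mul_le_mul_iff_right hκ₃ ENNReal.ofReal_ne_top).1 (le_trans ?_ hφg)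
    exact mul_meas_ge_le_lintegral₀
      (hg.aestronglyMeasurable.sub hφ.aestronglyMeasurable).enorm _
  obtain ⟨δ₁, hδ₁, hφuc⟩ := Metric.uniformContinuous_iff.1
    (hφc.uniformContinuous_of_continuous hφ) (κ / 3) (by positivity)
  filter_upwards [Metric.ball_mem_nhds 0 hδ₁] with δ hδ
  have hsub : {s | κ ≤ |g (s + δ) - g s|} ⊆ (· + δ) ⁻¹' B ∪ B := by
    intro s hs
    by_contra hc
    simp only [mem_union, mem_preimage, mem_ofPred_eq, not_or, not_le, B] at hc hs
    have hφs : |φ (s + δ) - φ s| < κ / 3 := hφuc (by simpa [Real.dist_eq] using hδ)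
    linarith [abs_sub_le (g (s + δ)) (φ (s + δ)) (g s), abs_sub_le (φ (s + δ)) (φ s) (g s),
      abs_sub_comm (φ s) (g s)]
  calc volume {s | κ ≤ |g (s + δ) - g s|} ≤ volume ((· + δ) ⁻¹' B) + volume B :=
        (measure_mono hsub).trans (measure_union_le _ _)
    _ ≤ e / 2 + e / 2 := by rw [measure_preimage_add_right]; exact add_le_add hB hB
    _ = e := ENNReal.add_halves e

lemma eventually_volume_le_abs_comp_add_sub_le {f : ℝ → ℝ} (hf : Measurable f) (a b : ℝ)
    {h : ℝ} (hh : 0 < h) {e : ℝ≥0∞} (he : 0 < e) :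
    ∀ᶠ δ in 𝓝 0, volume {s ∈ Icc a b | h ≤ |f (s + δ) - f s|} ≤ e := by
  set J := Icc (a - 1) (b + 1)
  have he₃ : 0 < e / 3 := ENNReal.div_pos he.ne' (by norm_num)
  obtain ⟨g, hg, hgf⟩ :=
    exists_integrable_measure_sep_ne_le (μ := volume) hf measurableSet_Icc measure_Icc_lt_top.ne he₃
  filter_upwards [hg.eventually_volume_le_abs_comp_add_sub_le hh he₃,
    Metric.ball_mem_nhds 0 one_pos] with δ hgδ hδ
  set N := {s ∈ J | g s ≠ f s}
  have hsub : {s ∈ Icc a b | h ≤ |f (s + δ) - f s|} ⊆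
      (· + δ) ⁻¹' N ∪ N ∪ {s | h ≤ |g (s + δ) - g s|} := by
    rintro s ⟨⟨has, hsb⟩, hs⟩
    have hδ' := abs_lt.1 (show |δ| < 1 by simpa using hδ)
    have hsJ : s ∈ J := ⟨by linarith, by linarith⟩
    have hsδJ : s + δ ∈ J := ⟨by linarith, by linarith⟩
    by_contra hc
    simp only [mem_union, mem_preimage, mem_ofPred_eq, not_or, not_and, not_not,
      N] at hc
    obtain ⟨⟨h₁, h₂⟩, h₃⟩ := hc
    rw [h₁ hsδJ, h₂ hsJ] at h₃
    exact h₃ hs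
  calc volume {s ∈ Icc a b | h ≤ |f (s + δ) - f s|}
      ≤ volume ((· + δ) ⁻¹' N) + volume N + volume {s | h ≤ |g (s + δ) - g s|} :=
        (measure_mono hsub).trans <| (measure_union_le _ _).trans <|
          add_le_add_left (measure_union_le _ _) _
    _ ≤ e / 3 + e / 3 + e / 3 := by
        rw [measure_preimage_add_right]; exact add_le_add (add_le_add hgf hgf) hgδ
    _ = e := ENNReal.add_thirds e

lemma MuAP.eventually_mem_almostPeriods {f : ℝ → ℝ} (hap : MuAP f) (hf : Measurable f)
    {ε η : ℝ} (hε : 0 < ε) (hη : 0 < η) : ∀ᶠ δ in 𝓝 0, δ ∈ almostPeriods f ε η := by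
  obtain ⟨l, -, hE⟩ := hap (ε / 3) (by positivity) (η / 3) (by positivity)
  filter_upwards [eventually_volume_le_abs_comp_add_sub_le hf 0 (l + 1)
    (by positivity : 0 < η / 3) (ENNReal.ofReal_pos.2 (by positivity : 0 < ε / 3))] with δ hδ
  refine (Dfun_le_iff hε.le).2 fun u => ?_
  obtain ⟨τ, hτ, hτu, hτu'⟩ := hE (-u)
  have hτ' := (Dfun_le_iff (by positivity)).1 hτ
  have h₁ : Dloc (η / 3) (fun t => f (t + δ)) (fun t => f (t + δ + τ)) u ≤
      ENNReal.ofReal (ε / 3) := by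
    rw [Dloc_comp_add_right (f := f) (g := fun s => f (s + τ)) δ, Dloc_comm]
    exact hτ' _
  have h₂ : Dloc (η / 3) (fun t => f (t + δ + τ)) (fun t => f (t + τ)) u ≤
      ENNReal.ofReal (ε / 3) := by
    simp only [add_right_comm _ δ τ]
    rw [Dloc_comp_add_right (f := fun s => f (s + δ)) (g := f) τ]
    refine (measure_mono ?_).trans hδ
    rintro t ⟨⟨ht₁, ht₂⟩, ht⟩
    exact ⟨⟨by linarith, by linarith⟩, ht⟩
  calc Dloc η (fun t => f (t + δ)) f u
      ≤ Dloc (η / 3) (fun t => f (t + δ)) (fun t => f (t + δ + τ)) u +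
          Dloc (η / 3) (fun t => f (t + δ + τ)) (fun t => f (t + τ)) u +
          Dloc (η / 3) (fun t => f (t + τ)) f u := by
        conv_lhs => rw [← add_thirds η]
        exact Dloc_add_le.trans (add_le_add_left Dloc_add_le _)
    _ ≤ ENNReal.ofReal (ε / 3) + ENNReal.ofReal (ε / 3) + ENNReal.ofReal (ε / 3) :=
        add_le_add (add_le_add h₁ h₂) (hτ' u)
    _ = ENNReal.ofReal ε := by
        rw [← ENNReal.ofReal_add, ← ENNReal.ofReal_add, add_thirds] <;> positivity

lemma exists_finite_subset_forall_abs_sub_round_lt (A : Set ℝ) {δ : ℝ} (hδ : 0 < δ) :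
    ∃ F ⊆ A, F.Finite ∧ ∀ τ ∈ A, ∃ ρ ∈ F, |τ - ρ - round (τ - ρ)| < δ := by
  have htb : TotallyBounded (((↑) : ℝ → UnitAddCircle) '' A) :=
    isCompact_univ.totallyBounded.subset (subset_univ _)
  obtain ⟨F, hFA, hF, hcover⟩ :=
    exists_subset_image_finite_and.1 (Metric.finite_approx_of_totallyBounded htb δ hδ)
  refine ⟨F, hFA, hF, fun τ hτ => ?_⟩
  obtain ⟨ρ, hρ, hτρ⟩ : ∃ ρ ∈ F, dist (τ : UnitAddCircle) ρ < δ := by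
    simpa using hcover (mem_image_of_mem _ hτ)
  refine ⟨ρ, hρ, ?_⟩
  rwa [← UnitAddCircle.norm_eq, AddCircle.coe_sub, ← dist_eq_norm]

theorem stmt11 (f : ℝ → ℝ) (hf : Measurable f) (hap : MuAP f) :
    ∀ ε > 0, ∀ η > 0,
      RelDense ({τ | Dfun η (fun t => f (t + τ)) f ≤ ε} ∩
        Set.range (fun k : ℤ => (k : ℝ))) := by
  intro ε hε η hη
  obtain ⟨l, hl, hE⟩ := hap (ε / 3) (by positivity) (η / 3) (by positivity)
  obtain ⟨δ₀, hδ₀, hsmall⟩ := Metric.eventually_nhds_iff.1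
    (hap.eventually_mem_almostPeriods hf (by positivity : 0 < ε / 3) (by positivity : 0 < η / 3))
  obtain ⟨F, hFE, hF, hFτ⟩ :=
    exists_finite_subset_forall_abs_sub_round_lt (almostPeriods f (ε / 3) (η / 3)) hδ₀
  obtain ⟨C, hC, hFC⟩ := hF.isBounded.exists_pos_norm_le
  refine ⟨2 * C + l + 2, by positivity, fun x => ?_⟩
  obtain ⟨τ, hτ, hxτ, hτx⟩ := hE (x + C + 1)
  obtain ⟨ρ, hρ, hτρ⟩ := hFτ τ hτ
  set n := round (τ - ρ)
  have hn : (n : ℝ) = τ - (τ - ρ - n) - ρ := by ring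
  have hρC := abs_le.1 (hFC ρ hρ)
  have hround := abs_le.1 (abs_sub_round (τ - ρ))
  refine ⟨n, ⟨?_, n, rfl⟩, by linarith, by linarith⟩
  have hmem :=
    sub_mem_almostPeriods (sub_mem_almostPeriods hτ (hsmall (by simpa using hτρ))) (hFE hρ)
  rwa [add_thirds, add_thirds, ← hn] at hmem
end
end

section
/- Let σ ≥ 0 and f : ℝ → ℝ locally integrable with f(t) − σ ≥ 0 a.e. If the firing rate FR(t) = lim_{n→∞} n/Φⁿ(t) of the LIF model exists for some t ∈ ℝ, then it exists for every s ∈ ℝ and FR(s) = FR(t). -/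
/-!
Since `f - σ ≥ 0` a.e., the integral condition defining `Φ a` is already met at `Φ b` whenever
`a ≤ b`, so the firing map is monotone; and every orbit tends to `+∞`, because the
integrals over consecutive firing intervals equal `e^{σ Φⁿ(s)}`, which cannot tend to `0` along a
bounded orbit. Hence any two orbits interleave, `Φⁿ(t) ≤ Φⁿ⁺ᵏ(s)` and `Φⁿ(s) ≤ Φⁿ⁺ᵐ(t)`, and a
finite shift of the index does not change the asymptotics of `n / Φⁿ`.
-/

open MeasureTheory Filter Set intervalIntegral

noncomputable section

open Asymptotics Topology

theorem isEquivalent_natCast_div_comp_add (x : ℕ → ℝ) (m : ℕ) :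
    (fun n : ℕ => (n : ℝ) / x (n + m)) ~[atTop] fun n => ((n + m : ℕ) : ℝ) / x (n + m) := by
  have hm : (fun _ : ℕ => (m : ℝ)) =o[atTop] fun n : ℕ => (n : ℝ) :=
    (isLittleO_const_id_atTop _).comp_tendsto tendsto_natCast_atTop_atTop
  have hnum : (fun n : ℕ => ((n + m : ℕ) : ℝ)) ~[atTop] fun n => (n : ℝ) := by
    push_cast
    exact IsEquivalent.refl.add_isLittleO hm
  exact hnum.symm.div IsEquivalent.refl

theorem tendsto_natCast_div_comp_add_nhds_iff {x : ℕ → ℝ} (m : ℕ) {r : ℝ} :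
    Tendsto (fun n : ℕ => (n : ℝ) / x (n + m)) atTop (𝓝 r) ↔
      Tendsto (fun n : ℕ => (n : ℝ) / x n) atTop (𝓝 r) :=
  (isEquivalent_natCast_div_comp_add x m).tendsto_nhds_iff.trans
    (tendsto_add_atTop_iff_nat (f := fun n : ℕ => (n : ℝ) / x n) m)

theorem tendsto_natCast_div_comp_add_atTop_iff {x : ℕ → ℝ} (m : ℕ) :
    Tendsto (fun n : ℕ => (n : ℝ) / x (n + m)) atTop atTop ↔
      Tendsto (fun n : ℕ => (n : ℝ) / x n) atTop atTop :=
  (isEquivalent_natCast_div_comp_add x m).tendsto_atTop_iff.trans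
    (tendsto_add_atTop_iff_nat (f := fun n : ℕ => (n : ℝ) / x n) m)

section Interleaved

variable {x y : ℕ → ℝ} {k m : ℕ}

theorem eventually_natCast_div_interleaved (hx : ∀ᶠ n in atTop, 0 < x n)
    (hxy : ∀ n, x n ≤ y (n + k)) (hyx : ∀ n, y n ≤ x (n + m)) :
    ∀ᶠ n : ℕ in atTop, (n : ℝ) / x (n + (k + m)) ≤ n / y (n + k) ∧
      (n : ℝ) / y (n + k) ≤ n / x n := by
  filter_upwards [hx] with n hxn
  have hyn : 0 < y (n + k) := hxn.trans_le (hxy n)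
  refine ⟨div_le_div_of_nonneg_left n.cast_nonneg hyn ?_,
    div_le_div_of_nonneg_left n.cast_nonneg hxn (hxy n)⟩
  simpa only [add_assoc] using hyx (n + k)

theorem tendsto_natCast_div_nhds_of_interleaved (hx : ∀ᶠ n in atTop, 0 < x n)
    (hxy : ∀ n, x n ≤ y (n + k)) (hyx : ∀ n, y n ≤ x (n + m)) {r : ℝ}
    (h : Tendsto (fun n : ℕ => (n : ℝ) / x n) atTop (𝓝 r)) :
    Tendsto (fun n : ℕ => (n : ℝ) / y n) atTop (𝓝 r) := by
  have hbounds := eventually_natCast_div_interleaved hx hxy hyx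
  rw [← tendsto_natCast_div_comp_add_nhds_iff k]
  exact tendsto_of_tendsto_of_tendsto_of_le_of_le'
    ((tendsto_natCast_div_comp_add_nhds_iff _).2 h) h
    (hbounds.mono fun _ => And.left) (hbounds.mono fun _ => And.right)

theorem tendsto_natCast_div_atTop_of_interleaved (hx : ∀ᶠ n in atTop, 0 < x n)
    (hxy : ∀ n, x n ≤ y (n + k)) (hyx : ∀ n, y n ≤ x (n + m))
    (h : Tendsto (fun n : ℕ => (n : ℝ) / x n) atTop atTop) :
    Tendsto (fun n : ℕ => (n : ℝ) / y n) atTop atTop := by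
  rw [← tendsto_natCast_div_comp_add_atTop_iff k]
  exact tendsto_atTop_mono' _ ((eventually_natCast_div_interleaved hx hxy hyx).mono
    fun _ => And.left) ((tendsto_natCast_div_comp_add_atTop_iff _).2 h)

end Interleaved

section FiringMap

variable {σ : ℝ} {f : ℝ → ℝ}

theorem MeasureTheory.LocallyIntegrable.intervalIntegrable_sub_mul_exp
    (hf : LocallyIntegrable f volume) (σ a b : ℝ) :
    IntervalIntegrable (fun u => (f u - σ) * Real.exp (σ * u)) volume a b :=
  (((hf.sub (locallyIntegrable_const σ)).integrableOn_isCompact isCompact_uIcc).intervalIntegrable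
    ).mul_continuousOn (by fun_prop)

theorem FiringEq.isLeast_firingSet (hf : LocallyIntegrable f volume) {t y : ℝ}
    (hy : FiringEq σ f t y) : IsLeast (FiringSet σ f t) y := by
  refine ⟨⟨hy.1.1, hy.1.2.le⟩, fun z ⟨htz, hz⟩ => ?_⟩
  have hcont : ContinuousOn (fun w => ∫ u in t..w, (f u - σ) * Real.exp (σ * u)) (Icc t z) :=
    (continuous_primitive (hf.intervalIntegrable_sub_mul_exp σ) t).continuousOn
  obtain ⟨c, ⟨htc, hcz⟩, hc⟩ := intermediate_value_Icc htz.le hcont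
    ⟨by simpa only [integral_same] using (Real.exp_pos _).le, hz⟩
  have htc' : t < c := htc.lt_of_ne <| by
    rintro rfl
    simp only [integral_same] at hc
    exact (Real.exp_pos _).ne' hc.symm
  exact (hy.2 ⟨htc', hc.symm⟩).trans hcz

variable {Φ : ℝ → ℝ}

theorem monotone_of_forall_firingEq (hσ : 0 ≤ σ) (hf : LocallyIntegrable f volume)
    (hpos : ∀ᵐ t, σ ≤ f t) (hΦ : ∀ t, FiringEq σ f t (Φ t)) : Monotone Φ := by
  intro a b hab
  have hint := hf.intervalIntegrable_sub_mul_exp σ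
  have hmid : 0 ≤ ∫ u in a..b, (f u - σ) * Real.exp (σ * u) :=
    integral_nonneg_of_ae hab <| hpos.mono fun u hu =>
      mul_nonneg (sub_nonneg.2 hu) (Real.exp_pos _).le
  have hexp : Real.exp (σ * a) ≤ Real.exp (σ * b) :=
    Real.exp_le_exp.2 (mul_le_mul_of_nonneg_left hab hσ)
  refine ((hΦ a).isLeast_firingSet hf).2 ⟨hab.trans_lt (hΦ b).1.1, ?_⟩
  rw [← integral_add_adjacent_intervals (hint a b) (hint b (Φ b)), ← (hΦ b).1.2]
  linarith

theorem tendsto_iterate_atTop_of_forall_firingEq (hf : LocallyIntegrable f volume)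
    (hΦ : ∀ t, FiringEq σ f t (Φ t)) (s : ℝ) :
    Tendsto (fun n => Φ^[n] s) atTop atTop := by
  have hstep : ∀ n, Φ^[n + 1] s = Φ (Φ^[n] s) := fun n => Function.iterate_succ_apply' Φ n s
  have hmono : Monotone fun n => Φ^[n] s :=
    monotone_nat_of_le_succ fun n => (hstep n).symm ▸ ((hΦ _).1.1.le)
  refine (tendsto_atTop_of_monotone hmono).resolve_right fun ⟨L, hL⟩ => ?_
  set F : ℝ → ℝ := fun z => ∫ u in s..z, (f u - σ) * Real.exp (σ * u) with hF
  have hint := hf.intervalIntegrable_sub_mul_exp σ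
  have hincr : ∀ n, F (Φ^[n + 1] s) - F (Φ^[n] s) = Real.exp (σ * Φ^[n] s) := fun n => by
    simp only [hF, sub_eq_iff_eq_add', hstep, (hΦ (Φ^[n] s)).1.2]
    exact (integral_add_adjacent_intervals (hint _ _) (hint _ _)).symm
  have hFL : Tendsto (fun n => F (Φ^[n] s)) atTop (𝓝 (F L)) :=
    ((continuous_primitive hint s).tendsto L).comp hL
  have hzero : Tendsto (fun n => Real.exp (σ * Φ^[n] s)) atTop (𝓝 0) := by
    simpa only [sub_self] using ((hFL.comp (tendsto_add_atTop_nat 1)).sub hFL).congr hincr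
  have hexpL : Tendsto (fun n => Real.exp (σ * Φ^[n] s)) atTop (𝓝 (Real.exp (σ * L))) :=
    ((Real.continuous_exp.comp (continuous_const_mul σ)).tendsto L).comp hL
  exact (Real.exp_pos _).ne' (tendsto_nhds_unique hexpL hzero)

end FiringMap

theorem stmt15 (σ : ℝ) (hσ : 0 ≤ σ) (f : ℝ → ℝ) (hf : LocallyIntegrable f volume)
    (hpos : ∀ᵐ t, σ ≤ f t) (Φ : ℝ → ℝ) (hΦ : ∀ t, FiringEq σ f t (Φ t)) (t : ℝ) :
    (∀ r : ℝ, Tendsto (fun n : ℕ => (n : ℝ) / Φ^[n] t) atTop (nhds r) →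
      ∀ s : ℝ, Tendsto (fun n : ℕ => (n : ℝ) / Φ^[n] s) atTop (nhds r)) ∧
    (Tendsto (fun n : ℕ => (n : ℝ) / Φ^[n] t) atTop atTop →
      ∀ s : ℝ, Tendsto (fun n : ℕ => (n : ℝ) / Φ^[n] s) atTop atTop) := by
  have hmono := monotone_of_forall_firingEq hσ hf hpos hΦ
  have horbit := tendsto_iterate_atTop_of_forall_firingEq hf hΦ
  have interleave : ∀ a b, ∃ m, ∀ n, Φ^[n] a ≤ Φ^[n + m] b := fun a b => by
    obtain ⟨m, hm⟩ := ((horbit b).eventually_ge_atTop a).exists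
    exact ⟨m, fun n => by rw [Function.iterate_add_apply]; exact hmono.iterate n hm⟩
  have hpos_orbit := (horbit t).eventually_gt_atTop 0
  refine ⟨fun r h s => ?_, fun h s => ?_⟩ <;>
  obtain ⟨k, hk⟩ := interleave t s <;> obtain ⟨m, hm⟩ := interleave s t
  · exact tendsto_natCast_div_nhds_of_interleaved hpos_orbit hk hm h
  · exact tendsto_natCast_div_atTop_of_interleaved hpos_orbit hk hm h
end
end

section
/- There exists a locally integrable μ-almost periodic function f : ℝ → ℝ such that sup_{u∈ℝ} ∫_u^{u+δ} |f(t)| dt → 0 as δ → 0⁺, yet f is not S¹-almost periodic. -/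
open MeasureTheory Filter Set intervalIntegral

noncomputable section

/-!
Write `ν₂` for the 2-adic valuation. On `[z, z + 1)`, `z ≠ 0`, the function is `1` plus `2 ^ m`
spikes of height `2 ^ (m + 1)`, width `2 ^ (-(2m+1))` and spacing `2 ^ (-m)`, where `m = ν₂(z)`.

* A window of length `δ` meets at most two clusters, and takes from a cluster of level `m` a mass
  of at most `min (2 ^ (m + 1) δ, δ + 2 ^ (-m)) ≤ δ + 2 √δ` (the first bound serves the levels
  with `2 ^ m √δ ≤ 1`, the second all others).
* Translating by a multiple of `2 ^ N` changes nothing on clusters of level `< N`; all other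
  spikes have height `≥ 2 ^ (N + 1)`, so by Chebyshev they fill measure `O(2 ^ (-N))` of any
  unit window. Hence `f` is `μ`-almost periodic.
* For `1 < τ < 2 ^ N - 1`, the window `[2 ^ N - τ, 2 ^ N - τ + 1]` is translated onto the cluster
  at `2 ^ N`, of level `N`, while the window itself only meets clusters of level `< N`. On the
  level-`N` spikes `f(· + τ) - f ≥ 2 ^ N`, so `f(· + τ) - f` has `S¹` seminorm at least `1 / 2`.
  As `N` is arbitrary, the `1 / 2`-almost periods cannot be relatively dense.
-/

theorem padicValInt_add_of_not_dvd {p N : ℕ} [Fact p.Prime] {z M : ℤ}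
    (hz : ¬ (p : ℤ) ^ N ∣ z) (hM : (p : ℤ) ^ N ∣ M) :
    padicValInt p (z + M) = padicValInt p z := by
  have hzM : ¬ (p : ℤ) ^ N ∣ z + M := fun h => hz ((dvd_add_left hM).1 h)
  simp only [padicValInt_dvd_iff, not_or, not_le] at hz hzM
  refine le_antisymm ?_ ?_
  · by_contra! h
    have h1 : (p : ℤ) ^ (padicValInt p z + 1) ∣ z + M := (padicValInt_dvd_iff _ _).2 (Or.inr h)
    have h2 : (p : ℤ) ^ (padicValInt p z + 1) ∣ M := (pow_dvd_pow _ hz.2).trans hM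
    have := (padicValInt_dvd_iff (p := p) _ z).1 ((dvd_add_left h2).1 h1)
    omega
  · exact ((padicValInt_dvd_iff _ _).1 (((padicValInt_dvd z).add
      ((pow_dvd_pow _ hz.2.le).trans hM)))).resolve_left hzM.1

theorem pow_padicValInt_le_abs {p : ℕ} {z : ℤ} (hz : z ≠ 0) : (p : ℤ) ^ padicValInt p z ≤ |z| :=
  Int.le_of_dvd (abs_pos.2 hz) ((dvd_abs _ _).2 (padicValInt_dvd z))

theorem RelDense.mono {A B : Set ℝ} (hA : RelDense A) (hAB : A ⊆ B) : RelDense B := by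
  obtain ⟨l, hl, h⟩ := hA
  exact ⟨l, hl, fun x => let ⟨τ, hτ, hxτ⟩ := h x; ⟨τ, hAB hτ, hxτ⟩⟩

theorem relDense_zmultiples {p : ℝ} (hp : 0 < p) : RelDense (AddSubgroup.zmultiples p) := by
  refine ⟨2 * p, by positivity, fun x => ⟨(⌊x / p⌋ + 1) • p, ⟨_, rfl⟩, ?_, ?_⟩⟩
  · have := Int.lt_floor_add_one (x / p)
    rw [div_lt_iff₀ hp] at this
    simpa using this
  · have := Int.floor_le (x / p)
    rw [le_div_iff₀ hp] at this
    simp only [zsmul_eq_mul, Int.cast_add, Int.cast_one]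
    nlinarith

theorem intervalIntegrable_indicator_one {μ : Measure ℝ} [IsLocallyFiniteMeasure μ] {s : Set ℝ}
    (hs : MeasurableSet s) (a b : ℝ) : IntervalIntegrable (s.indicator (1 : ℝ → ℝ)) μ a b :=
  ⟨intervalIntegrable_const.1.indicator hs, intervalIntegrable_const.2.indicator hs⟩

section FractIndicator

variable {c : ℝ}

theorem periodic_indicator_fract_lt :
    Function.Periodic ({s : ℝ | Int.fract s < c}.indicator (1 : ℝ → ℝ)) 1 := by
  intro s
  simp only [Set.indicator, Set.mem_ofPred_eq, Int.fract_add_one, Pi.one_apply]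

theorem measurableSet_fract_lt : MeasurableSet {s : ℝ | Int.fract s < c} :=
  measurableSet_lt measurable_fract measurable_const

theorem integral_indicator_fract_lt_add_intCast (hc0 : 0 ≤ c) (hc1 : c ≤ 1) (a : ℝ) (n : ℤ) :
    ∫ s in a..a + n, {s : ℝ | Int.fract s < c}.indicator 1 s = n * c := by
  have hint := intervalIntegrable_indicator_one (μ := volume) (measurableSet_fract_lt (c := c))
  have h01 : ∫ s in (0 : ℝ)..1, {s : ℝ | Int.fract s < c}.indicator 1 s = c := by
    rw [integral_of_le zero_le_one, integral_Ioc_eq_integral_Ioo,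
      setIntegral_congr_fun measurableSet_Ioo (g := (Iio c).indicator 1)]
    · rw [setIntegral_indicator measurableSet_Iio]
      simp [Ioo_inter_Iio, min_eq_right hc1, hc0]
    · intro s hs
      simp only [Set.indicator, Set.mem_ofPred_eq, mem_Iio, Int.fract_eq_self.2 ⟨hs.1.le, hs.2⟩]
  have := periodic_indicator_fract_lt.intervalIntegral_add_zsmul_eq n a hint
  rw [zsmul_one, periodic_indicator_fract_lt.intervalIntegral_add_eq a 0, zero_add, h01] at this
  rw [this, zsmul_eq_mul]

theorem integral_indicator_fract_lt_le (hc0 : 0 ≤ c) (hc1 : c ≤ 1) {a b : ℝ} (hab : a ≤ b) :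
    ∫ s in a..b, {s : ℝ | Int.fract s < c}.indicator 1 s ≤ (b - a + 1) * c := by
  have hb : b ≤ a + ⌈b - a⌉ := by linarith [Int.le_ceil (b - a)]
  calc ∫ s in a..b, {s : ℝ | Int.fract s < c}.indicator 1 s
      ≤ ∫ s in a..a + ⌈b - a⌉, {s : ℝ | Int.fract s < c}.indicator 1 s :=
        integral_mono_interval le_rfl hab hb
          (.of_forall fun s => Set.indicator_nonneg (fun _ _ => zero_le_one) s)
          (intervalIntegrable_indicator_one measurableSet_fract_lt _ _)
    _ = ⌈b - a⌉ * c := integral_indicator_fract_lt_add_intCast hc0 hc1 a _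
    _ ≤ (b - a + 1) * c := by gcongr; exact (Int.ceil_lt_add_one _).le

end FractIndicator

namespace SpikeExample

/-- The union of the intervals `[k / 2 ^ m, k / 2 ^ m + 2 ^ (-(2 * m + 1)))`, `k ∈ ℤ`. -/
def spikes (m : ℕ) : Set ℝ := {t | Int.fract (2 ^ m * t) < (2 ^ (m + 1))⁻¹}

section Spikes

variable (m : ℕ)

theorem measurableSet_spikes : MeasurableSet (spikes m) :=
  measurableSet_lt (measurable_fract.comp (measurable_const_mul _)) measurable_const

theorem indicator_spikes_add_intCast (t : ℝ) (k : ℤ) :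
    (spikes m).indicator (1 : ℝ → ℝ) (t + k) = (spikes m).indicator 1 t := by
  have : (2 : ℝ) ^ m * (t + k) = 2 ^ m * t + ((2 ^ m * k : ℤ) : ℝ) := by push_cast; ring
  have hmem : t + k ∈ spikes m ↔ t ∈ spikes m := by
    simp only [spikes, Set.mem_ofPred_eq, this, Int.fract_add_intCast]
  by_cases hs : t ∈ spikes m
  · rw [Set.indicator_of_mem hs, Set.indicator_of_mem (hmem.2 hs), Pi.one_apply, Pi.one_apply]
  · rw [Set.indicator_of_notMem hs, Set.indicator_of_notMem (mt hmem.1 hs)]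

theorem integral_indicator_spikes (a b : ℝ) :
    ∫ t in a..b, (spikes m).indicator (1 : ℝ → ℝ) t =
      ((2 : ℝ) ^ m)⁻¹ * ∫ s in 2 ^ m * a..2 ^ m * b,
        {s : ℝ | Int.fract s < (2 ^ (m + 1))⁻¹}.indicator 1 s :=
  integral_comp_mul_left (fun s => {s : ℝ | Int.fract s < (2 ^ (m + 1))⁻¹}.indicator 1 s)
    (by positivity)

variable {m}

theorem integral_indicator_spikes_intCast (z : ℤ) :
    ∫ t in z..z + 1, (spikes m).indicator (1 : ℝ → ℝ) t = (2 ^ (m + 1))⁻¹ := by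
  have : (2 : ℝ) ^ m * (z + 1) = 2 ^ m * z + ((2 ^ m : ℤ) : ℝ) := by push_cast; ring
  rw [integral_indicator_spikes, this, integral_indicator_fract_lt_add_intCast (by positivity)
    (inv_le_one_of_one_le₀ (one_le_pow₀ one_le_two))]
  push_cast
  field_simp

theorem integral_indicator_spikes_le {a b : ℝ} (hab : a ≤ b) :
    ∫ t in a..b, (spikes m).indicator (1 : ℝ → ℝ) t ≤ (b - a + (2 ^ m)⁻¹) / 2 ^ (m + 1) := by
  rw [integral_indicator_spikes]
  calc _ ≤ ((2 : ℝ) ^ m)⁻¹ * ((2 ^ m * b - 2 ^ m * a + 1) * ((2 : ℝ) ^ (m + 1))⁻¹) := by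
        gcongr
        exact integral_indicator_fract_lt_le (by positivity)
          (inv_le_one_of_one_le₀ (one_le_pow₀ one_le_two)) (by gcongr)
    _ = (b - a + (2 ^ m)⁻¹) / 2 ^ (m + 1) := by field_simp

theorem two_pow_mul_integral_indicator_spikes_le (u : ℝ) {δ : ℝ} (hδ : 0 ≤ δ) :
    2 ^ (m + 1) * ∫ t in u..u + δ, (spikes m).indicator (1 : ℝ → ℝ) t ≤ δ + 2 * √δ := by
  have h_le_len : ∫ t in u..u + δ, (spikes m).indicator (1 : ℝ → ℝ) t ≤ δ := by
    have := integral_mono_on (μ := volume) (by linarith) (intervalIntegrable_indicator_one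
      (measurableSet_spikes m) u (u + δ)) intervalIntegrable_const
      (fun t _ => Set.indicator_le_self' (fun _ _ => zero_le_one) t)
    simpa using this
  have h_le_density := integral_indicator_spikes_le (m := m) (a := u) (b := u + δ) (by linarith)
  rw [add_sub_cancel_left, le_div_iff₀ (by positivity)] at h_le_density
  have hpow : (0 : ℝ) < 2 ^ m := by positivity
  have hδ_eq : δ = √δ * √δ := (Real.mul_self_sqrt hδ).symm
  have hs := Real.sqrt_nonneg δ
  rw [pow_succ] at h_le_density ⊢
  rcases le_or_gt (2 ^ m * √δ) 1 with h | h
  · nlinarith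
  · have : ((2 : ℝ) ^ m)⁻¹ < √δ := by rw [inv_lt_iff_one_lt_mul₀ hpow]; linarith
    nlinarith

end Spikes

def spikeHeight (z : ℤ) : ℝ := if z = 0 then 0 else 2 ^ (padicValInt 2 z + 1)

/-- The paper's `f = 1 + ∑ fₙ`: the cluster on `[z, z + 1)` is part of `fₙ` for `n = ν₂(z) + 1`. -/
def spikeFun (t : ℝ) : ℝ := 1 + spikeHeight ⌊t⌋ * (spikes (padicValInt 2 ⌊t⌋)).indicator 1 t

theorem spikeHeight_nonneg (z : ℤ) : 0 ≤ spikeHeight z := by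
  unfold spikeHeight; split_ifs <;> positivity

theorem spikeHeight_le (z : ℤ) : spikeHeight z ≤ 2 ^ (padicValInt 2 z + 1) := by
  unfold spikeHeight; split_ifs <;> first | positivity | rfl

theorem spikeHeight_le_abs (z : ℤ) : spikeHeight z ≤ 2 * |(z : ℝ)| := by
  unfold spikeHeight
  split_ifs with hz
  · positivity
  · have := pow_padicValInt_le_abs (p := 2) hz
    rw [pow_succ, mul_comm, ← Int.cast_abs]
    gcongr
    exact_mod_cast this

theorem spikeFun_of_floor_eq {t : ℝ} {z : ℤ} (ht : ⌊t⌋ = z) :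
    spikeFun t = 1 + spikeHeight z * (spikes (padicValInt 2 z)).indicator 1 t := by
  rw [spikeFun, ht]

theorem one_le_spikeFun (t : ℝ) : 1 ≤ spikeFun t :=
  le_add_of_nonneg_right (mul_nonneg (spikeHeight_nonneg _)
    (Set.indicator_nonneg (fun _ _ => zero_le_one) t))

theorem spikeFun_le (t : ℝ) : spikeFun t ≤
    1 + 2 ^ (padicValInt 2 ⌊t⌋ + 1) * (spikes (padicValInt 2 ⌊t⌋)).indicator 1 t := by
  unfold spikeFun
  gcongr
  · exact Set.indicator_nonneg (fun _ _ => zero_le_one) t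
  · exact spikeHeight_le _

theorem spikeFun_le_of_not_dvd {N : ℕ} {t : ℝ} (h : ¬ (2 : ℤ) ^ N ∣ ⌊t⌋) :
    spikeFun t ≤ 1 + 2 ^ N := by
  have hlt : padicValInt 2 ⌊t⌋ < N := by
    have := mt (padicValInt_dvd_iff (p := 2) N ⌊t⌋).2 (by exact_mod_cast h)
    omega
  calc spikeFun t ≤ 1 + 2 ^ (padicValInt 2 ⌊t⌋ + 1) * 1 := by
        refine (spikeFun_le t).trans ?_
        gcongr
        exact Set.indicator_le_self' (fun _ _ => zero_le_one) t
    _ ≤ 1 + 2 ^ N := by rw [mul_one]; gcongr; norm_num; omega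

theorem measurable_spikeFun : Measurable spikeFun := by
  have : Measurable fun p : ℝ × ℤ =>
      1 + spikeHeight p.2 * (spikes (padicValInt 2 p.2)).indicator (1 : ℝ → ℝ) p.1 :=
    measurable_from_prod_countable_left fun z =>
      show Measurable fun t => 1 + spikeHeight z * (spikes (padicValInt 2 z)).indicator 1 t from
        ((measurable_one.indicator (measurableSet_spikes _)).const_mul _).const_add _
  exact this.comp (measurable_id.prodMk Int.measurable_floor)

theorem locallyIntegrable_spikeFun : LocallyIntegrable spikeFun volume := by
  have hbound : LocallyIntegrable (fun t : ℝ => 3 + 2 * |t|) volume :=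
    (continuous_const.add (continuous_const.mul continuous_abs)).locallyIntegrable
  refine hbound.mono measurable_spikeFun.aestronglyMeasurable (.of_forall fun t => ?_)
  have hfloor : |(⌊t⌋ : ℝ)| ≤ |t| + 1 := by
    rw [abs_le]
    constructor <;> linarith [Int.floor_le t, Int.lt_floor_add_one t, neg_abs_le t, le_abs_self t]
  have := spikeFun_of_floor_eq (t := t) rfl
  rw [Real.norm_of_nonneg (by linarith [one_le_spikeFun t]), Real.norm_of_nonneg (by positivity)]
  calc spikeFun t ≤ 1 + spikeHeight ⌊t⌋ * 1 := by
        rw [this]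
        gcongr
        · exact spikeHeight_nonneg _
        · exact Set.indicator_le_self' (fun _ _ => zero_le_one) t
    _ ≤ 3 + 2 * |t| := by linarith [spikeHeight_le_abs ⌊t⌋]

theorem intervalIntegrable_spikeFun (a b : ℝ) : IntervalIntegrable spikeFun volume a b :=
  (locallyIntegrable_spikeFun.integrableOn_isCompact isCompact_uIcc).intervalIntegrable

theorem integral_spikeFun_le (u : ℝ) {δ : ℝ} (hδ0 : 0 ≤ δ) (hδ1 : δ ≤ 1) :
    ∫ t in u..u + δ, spikeFun t ≤ 3 * δ + 4 * √δ := by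
  set g : ℕ → ℝ → ℝ := fun m t => 2 ^ (m + 1) * (spikes m).indicator 1 t
  set m₁ := padicValInt 2 ⌊u⌋
  set m₂ := padicValInt 2 (⌊u⌋ + 1)
  have hg_int (m : ℕ) : IntervalIntegrable (g m) volume u (u + δ) :=
    (intervalIntegrable_indicator_one (measurableSet_spikes m) _ _).const_mul _
  have hg_integral (m : ℕ) : ∫ t in u..u + δ, g m t ≤ δ + 2 * √δ := by
    rw [intervalIntegral.integral_const_mul]
    exact two_pow_mul_integral_indicator_spikes_le u hδ0
  have hpt : ∀ t ∈ Icc u (u + δ), spikeFun t ≤ 1 + g m₁ t + g m₂ t := by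
    intro t ht
    have hg0 (m : ℕ) : 0 ≤ g m t :=
      mul_nonneg (by positivity) (Set.indicator_nonneg (fun _ _ => zero_le_one) t)
    have h₁ : ⌊u⌋ ≤ ⌊t⌋ := Int.floor_le_floor ht.1
    have h₂ : ⌊t⌋ ≤ ⌊u⌋ + 1 := by
      rw [← Int.floor_add_one]; exact Int.floor_le_floor (by linarith [ht.2])
    obtain h | h : ⌊t⌋ = ⌊u⌋ ∨ ⌊t⌋ = ⌊u⌋ + 1 := by omega
    all_goals have := spikeFun_le t; rw [h] at this; linarith [hg0 m₁, hg0 m₂]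
  calc ∫ t in u..u + δ, spikeFun t
      ≤ ∫ t in u..u + δ, (1 + g m₁ t + g m₂ t) :=
        integral_mono_on (by linarith) (intervalIntegrable_spikeFun _ _)
          ((intervalIntegrable_const.add (hg_int _)).add (hg_int _)) hpt
    _ = δ + (∫ t in u..u + δ, g m₁ t) + ∫ t in u..u + δ, g m₂ t := by
        rw [integral_add (intervalIntegrable_const.add (hg_int _)) (hg_int _),
          integral_add intervalIntegrable_const (hg_int _)]
        simp
    _ ≤ δ + (δ + 2 * √δ) + (δ + 2 * √δ) := by gcongr <;> exact hg_integral _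
    _ = 3 * δ + 4 * √δ := by ring

theorem tendsto_iSup_integral_abs_spikeFun :
    Tendsto (fun δ => ⨆ u : ℝ, ∫ t in u..(u + δ), |spikeFun t|)
      (nhdsWithin 0 (Set.Ioi 0)) (nhds 0) := by
  have hbound : Tendsto (fun δ : ℝ => 3 * δ + 4 * √δ) (nhdsWithin 0 (Set.Ioi 0)) (nhds 0) := by
    have : Continuous fun δ : ℝ => 3 * δ + 4 * √δ := by fun_prop
    simpa using (this.tendsto 0).mono_left nhdsWithin_le_nhds
  have habs (u δ : ℝ) : ∫ t in u..u + δ, |spikeFun t| = ∫ t in u..u + δ, spikeFun t :=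
    integral_congr fun t _ => abs_of_pos (zero_lt_one.trans_le (one_le_spikeFun t))
  refine tendsto_of_tendsto_of_tendsto_of_le_of_le' tendsto_const_nhds hbound ?_ ?_
  all_goals filter_upwards [Ioc_mem_nhdsGT (zero_lt_one' ℝ)] with δ hδ
  · exact Real.iSup_nonneg fun u =>
      integral_nonneg (by linarith [hδ.1]) fun t _ => abs_nonneg _
  · exact Real.iSup_le (fun u => (habs u δ).trans_le (integral_spikeFun_le u hδ.1.le hδ.2))
      (by linarith [hδ.1, Real.sqrt_nonneg δ])

theorem spikeFun_add_intCast_of_not_dvd {N : ℕ} {M : ℤ} (hM : (2 : ℤ) ^ N ∣ M) {t : ℝ}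
    (h : ¬ (2 : ℤ) ^ N ∣ ⌊t⌋) : spikeFun (t + M) = spikeFun t := by
  have hz : ⌊t⌋ ≠ 0 := by rintro h0; exact h (h0 ▸ dvd_zero _)
  have hzM : ⌊t⌋ + M ≠ 0 := by rintro h0; exact h ((dvd_add_left hM).1 (h0 ▸ dvd_zero _))
  have hν : padicValInt 2 (⌊t⌋ + M) = padicValInt 2 ⌊t⌋ :=
    padicValInt_add_of_not_dvd (by exact_mod_cast h) (by exact_mod_cast hM)
  rw [spikeFun_of_floor_eq (Int.floor_add_intCast t M), spikeFun, spikeHeight, spikeHeight,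
    if_neg hz, if_neg hzM, hν, indicator_spikes_add_intCast]

theorem spikeFun_eq_one_of_dvd {N : ℕ} {t : ℝ} (h : (2 : ℤ) ^ N ∣ ⌊t⌋)
    (ht : spikeFun t - 1 < 2 ^ (N + 1)) : spikeFun t = 1 := by
  unfold spikeFun spikeHeight at *
  split_ifs at * with hz
  · simp
  have hN : N ≤ padicValInt 2 ⌊t⌋ :=
    ((padicValInt_dvd_iff (p := 2) N ⌊t⌋).1 (by exact_mod_cast h)).resolve_left hz
  by_cases hs : t ∈ spikes (padicValInt 2 ⌊t⌋)
  · rw [Set.indicator_of_mem hs, Pi.one_apply, mul_one, add_sub_cancel_left] at ht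
    exact absurd ht (not_lt.2 (pow_le_pow_right₀ one_le_two (by omega)))
  · simp [Set.indicator_of_notMem hs]

theorem spikeFun_add_intCast_eq {N : ℕ} {M : ℤ} (hM : (2 : ℤ) ^ N ∣ M) {t : ℝ}
    (ht : spikeFun t - 1 < 2 ^ (N + 1)) (htM : spikeFun (t + M) - 1 < 2 ^ (N + 1)) :
    spikeFun (t + M) = spikeFun t := by
  by_cases h : (2 : ℤ) ^ N ∣ ⌊t⌋
  · have h' : (2 : ℤ) ^ N ∣ ⌊t + M⌋ := by rw [Int.floor_add_intCast]; exact dvd_add h hM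
    rw [spikeFun_eq_one_of_dvd h ht, spikeFun_eq_one_of_dvd h' htM]
  · exact spikeFun_add_intCast_of_not_dvd hM h

theorem volume_tall_inter_Icc_le (N : ℕ) (v : ℝ) :
    volume ({t | 2 ^ (N + 1) ≤ spikeFun t - 1} ∩ Icc v (v + 1)) ≤ ENNReal.ofReal (3 / 2 ^ N) := by
  set S := {t | 2 ^ (N + 1) ≤ spikeFun t - 1} ∩ Icc v (v + 1)
  have hint : IntegrableOn (fun t => spikeFun t - 1) (Icc v (v + 1)) :=
    (locallyIntegrable_spikeFun.integrableOn_isCompact isCompact_Icc).sub (integrableOn_const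
      (measure_Icc_lt_top).ne)
  have hmass : ∫ t in Icc v (v + 1), (spikeFun t - 1) ≤ 6 := by
    rw [integral_Icc_eq_integral_Ioc, ← integral_of_le (by linarith),
      integral_sub (intervalIntegrable_spikeFun _ _) intervalIntegrable_const]
    have := integral_spikeFun_le v zero_le_one le_rfl
    simp only [Real.sqrt_one, intervalIntegral.integral_const, add_sub_cancel_left, smul_eq_mul,
      mul_one] at this ⊢
    linarith
  have hchebyshev : 2 ^ (N + 1) * volume.real S ≤ 6 := by
    have := mul_meas_ge_le_integral_of_nonneg
      (.of_forall fun t => sub_nonneg.2 (one_le_spikeFun t)) hint (2 ^ (N + 1))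
    rw [measureReal_restrict_apply' measurableSet_Icc] at this
    linarith
  rw [ENNReal.le_ofReal_iff_toReal_le (measure_ne_top_of_subset inter_subset_right
    measure_Icc_lt_top.ne) (by positivity), ← measureReal_def, le_div_iff₀ (by positivity)]
  rw [pow_succ] at hchebyshev
  linarith

theorem muAP_spikeFun : MuAP spikeFun := by
  intro ε hε η hη
  obtain ⟨N, hN⟩ : ∃ N : ℕ, 6 / ε < 2 ^ N := pow_unbounded_of_one_lt _ one_lt_two
  refine (relDense_zmultiples (p := 2 ^ N) (by positivity)).mono ?_
  rintro _ ⟨k, rfl⟩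
  set M : ℤ := 2 ^ N * k
  have hM : k • (2 : ℝ) ^ N = M := by simp [M, zsmul_eq_mul, mul_comm]
  simp only [Set.mem_ofPred_eq, hM, Dfun]
  refine Real.iSup_le (fun u => ENNReal.toReal_le_of_le_ofReal hε.le ?_) hε.le
  set T := {t | 2 ^ (N + 1) ≤ spikeFun t - 1}
  have hsub : {t ∈ Icc u (u + 1) | η ≤ |spikeFun (t + M) - spikeFun t|} ⊆
      (T ∩ Icc u (u + 1)) ∪ (· + (M : ℝ)) ⁻¹' (T ∩ Icc (u + M) (u + M + 1)) := by
    rintro t ⟨ht, hηt⟩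
    by_contra hnot
    simp only [T, mem_union, mem_inter_iff, mem_preimage, Set.mem_ofPred_eq, mem_Icc] at hnot
    have heq := spikeFun_add_intCast_eq (dvd_mul_right _ k) (N := N) (M := M) (t := t)
      (by by_contra h; exact hnot (Or.inl ⟨not_lt.1 h, ht⟩))
      (by by_contra h; exact hnot (Or.inr ⟨not_lt.1 h, by linarith [ht.1], by linarith [ht.2]⟩))
    rw [heq, sub_self, abs_zero] at hηt
    linarith
  calc volume {t ∈ Icc u (u + 1) | η ≤ |spikeFun (t + M) - spikeFun t|}
      ≤ ENNReal.ofReal (3 / 2 ^ N) + ENNReal.ofReal (3 / 2 ^ N) := by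
        refine (measure_mono hsub).trans ((measure_union_le _ _).trans (add_le_add
          (volume_tall_inter_Icc_le N u) ?_))
        rw [measure_preimage_add_right]
        exact volume_tall_inter_Icc_le N _
    _ ≤ ENNReal.ofReal ε := by
        rw [← ENNReal.ofReal_add (by positivity) (by positivity)]
        refine ENNReal.ofReal_le_ofReal ?_
        rw [div_lt_iff₀ hε] at hN
        rw [← add_div, div_le_iff₀ (by positivity)]
        linarith

theorem intervalIntegrable_spikeFun_add (τ a b : ℝ) :
    IntervalIntegrable (fun u => spikeFun (u + τ)) volume a b := by
  simpa using (intervalIntegrable_spikeFun (a + τ) (b + τ)).comp_add_right τ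

theorem bddAbove_integral_abs_sub_spikeFun (τ : ℝ) :
    BddAbove (range fun t => ∫ u in t..t + 1, |spikeFun (u + τ) - spikeFun u|) := by
  refine ⟨14, ?_⟩
  rintro _ ⟨t, rfl⟩
  have hshift := integral_spikeFun_le (t + τ) zero_le_one le_rfl
  have hunit := integral_spikeFun_le t zero_le_one le_rfl
  rw [add_right_comm, ← integral_comp_add_right] at hshift
  have hf := intervalIntegrable_spikeFun t (t + 1)
  have hfτ := intervalIntegrable_spikeFun_add τ t (t + 1)
  calc ∫ u in t..t + 1, |spikeFun (u + τ) - spikeFun u|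
      ≤ ∫ u in t..t + 1, (spikeFun (u + τ) + spikeFun u) :=
        integral_mono_on (by linarith) (hfτ.sub hf).abs (hfτ.add hf) fun u _ =>
          (abs_sub _ _).trans_eq (by rw [abs_of_nonneg, abs_of_nonneg] <;>
            linarith [one_le_spikeFun u, one_le_spikeFun (u + τ)])
    _ ≤ 14 := by
        rw [integral_add hfτ hf]
        simp only [Real.sqrt_one] at hshift hunit
        linarith

theorem half_le_integral_abs_sub_spikeFun {N : ℕ} {τ : ℝ} (hτ1 : 1 < τ) (hτN : τ + 1 ≤ 2 ^ N) :
    1 / 2 ≤ ∫ u in (2 ^ N - τ)..(2 ^ N - τ + 1), |spikeFun (u + τ) - spikeFun u| := by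
  set z : ℤ := 2 ^ N
  have hz : (z : ℝ) = 2 ^ N := by push_cast [z]; rfl
  have hνz : padicValInt 2 z = N := by
    rw [show z = ((2 ^ N : ℕ) : ℤ) by push_cast [z]; rfl, padicValInt.of_nat,
      padicValNat.prime_pow]
  have hheight : spikeHeight z = 2 ^ (N + 1) := by
    rw [spikeHeight, if_neg (by positivity), hνz]
  -- `u + τ` runs through the cluster at `z`, while `0 < z - ⌊u⌋ < 2 ^ N` keeps `ν₂ ⌊u⌋ < N`
  have hpt : ∀ u ∈ Ioo (2 ^ N - τ) (2 ^ N - τ + 1),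
      2 ^ N * (spikes N).indicator 1 (u + τ) ≤ |spikeFun (u + τ) - spikeFun u| := by
    intro u hu
    have hfloor : ⌊u + τ⌋ = z := by
      rw [Int.floor_eq_iff, hz]; constructor <;> linarith [hu.1, hu.2]
    have hndvd : ¬ (2 : ℤ) ^ N ∣ ⌊u⌋ := by
      have h1 : (0 : ℝ) < z - ⌊u⌋ := by linarith [Int.floor_le u, hu.2]
      have h2 : (z : ℝ) - ⌊u⌋ < 2 ^ N := by linarith [Int.lt_floor_add_one u, hu.1]
      rw [← hz] at h2
      norm_cast at h1 h2
      intro hdvd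
      have := Int.le_of_dvd h1 (dvd_sub (dvd_refl _) hdvd)
      omega
    have hlow := spikeFun_le_of_not_dvd hndvd
    rw [spikeFun_of_floor_eq hfloor, hheight, hνz]
    by_cases hs : u + τ ∈ spikes N
    · rw [Set.indicator_of_mem hs, Pi.one_apply, mul_one]
      refine le_trans ?_ (le_abs_self _)
      rw [pow_succ]
      linarith
    · rw [Set.indicator_of_notMem hs, mul_zero]
      exact abs_nonneg _
  have hind : IntervalIntegrable (fun u => (spikes N).indicator (1 : ℝ → ℝ) (u + τ)) volume
      (2 ^ N - τ) (2 ^ N - τ + 1) := by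
    simpa [sub_add_eq_add_sub] using (intervalIntegrable_indicator_one (measurableSet_spikes N)
      (2 ^ N) (2 ^ N + 1)).comp_add_right τ
  calc (1 : ℝ) / 2 = 2 ^ N * ∫ u in z..z + 1, (spikes N).indicator 1 u := by
        rw [integral_indicator_spikes_intCast, pow_succ]; field_simp
    _ = ∫ u in (2 ^ N - τ)..(2 ^ N - τ + 1), 2 ^ N * (spikes N).indicator 1 (u + τ) := by
        rw [intervalIntegral.integral_const_mul, integral_comp_add_right, hz]
        congr 2 <;> ring
    _ ≤ ∫ u in (2 ^ N - τ)..(2 ^ N - τ + 1), |spikeFun (u + τ) - spikeFun u| :=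
        integral_mono_on_of_le_Ioo (by linarith) (hind.const_mul _)
          ((intervalIntegrable_spikeFun_add τ _ _).sub (intervalIntegrable_spikeFun _ _)).abs hpt

theorem not_s1AP_spikeFun : ¬ S1AP spikeFun := by
  intro h
  obtain ⟨l, -, hl⟩ := h (1 / 2) one_half_pos
  obtain ⟨τ, hτ, hτ1, hτl⟩ := hl 1
  obtain ⟨N, hN⟩ : ∃ N : ℕ, l + 2 < 2 ^ N := pow_unbounded_of_one_lt _ one_lt_two
  have hlow := half_le_integral_abs_sub_spikeFun (N := N) hτ1 (by linarith)
  have hsup := le_ciSup (bddAbove_integral_abs_sub_spikeFun τ) (2 ^ N - τ)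
  exact absurd (hτ : SNorm _ < 1 / 2) (not_lt.2 (hlow.trans hsup))

end SpikeExample

theorem stmt19 :
    ∃ f : ℝ → ℝ, LocallyIntegrable f volume ∧ MuAP f ∧
      Tendsto (fun δ => ⨆ u : ℝ, ∫ t in u..(u + δ), |f t|)
        (nhdsWithin 0 (Set.Ioi 0)) (nhds 0) ∧
      ¬ S1AP f :=
  ⟨SpikeExample.spikeFun, SpikeExample.locallyIntegrable_spikeFun, SpikeExample.muAP_spikeFun,
    SpikeExample.tendsto_iSup_integral_abs_spikeFun, SpikeExample.not_s1AP_spikeFun⟩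
end
end
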